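/- arXiv:1507.07492 — 8 statements merged into one kernel-verified Lean document; each statement's English description precedes it below -/
import Mathlib

section
/- Let {a; b₁, …, b_L} be a quincunx tight framelet filter bank of 2D filters whose first high-pass filter is canonical, i.e. b̂₁(ω) = e^{−iω₁}·conj(â(ω+(π,π))) for all ω ∈ ℝ². If a is not an orthonormal M_{√2}-wavelet filter, i.e. there exists ω₀ ∈ ℝ² with |â(ω₀)|² + |â(ω₀+(π,π))|² ≠ 1, then L ≥ 3. -/
open Complex Real

/-- Fourier series of a finitely supported 2D filter. -/
noncomputable def fhat2 (a : ℤ × ℤ → ℂ) (ω : ℝ × ℝ) : ℂ :=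
  ∑ᶠ k : ℤ × ℤ, a k * Complex.exp (-(Complex.I) * ((k.1 : ℂ) * (ω.1 : ℂ) + (k.2 : ℂ) * (ω.2 : ℂ)))

lemma fhat2_shift2pi (a : ℤ × ℤ → ℂ) (ω : ℝ × ℝ) :
    fhat2 a (ω.1 + 2 * π, ω.2 + 2 * π) = fhat2 a ω := by
  unfold fhat2
  apply finsum_congr
  intro k
  congr 1
  rw [show (-(Complex.I) * ((k.1 : ℂ) * (((ω.1 + 2 * π : ℝ)) : ℂ)
        + (k.2 : ℂ) * (((ω.2 + 2 * π : ℝ)) : ℂ)))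
      = (-(Complex.I) * ((k.1 : ℂ) * (ω.1 : ℂ) + (k.2 : ℂ) * (ω.2 : ℂ)))
        + ((-(k.1 + k.2) : ℤ) : ℂ) * (2 * (π : ℂ) * Complex.I) by push_cast; ring]
  rw [Complex.exp_add, Complex.exp_int_mul_two_pi_mul_I, mul_one]

/-- if `{a; b₁, …, b_L}` is a quincunx tight framelet filter bank whose first
high-pass filter is canonical and `a` is not an orthonormal quincunx wavelet filter,
then `L ≥ 3`. -/
theorem stmt_0 (L : ℕ) (hL : 0 < L) (a : ℤ × ℤ → ℂ) (b : Fin L → ℤ × ℤ → ℂ)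
    (ha : (Function.support a).Finite) (hb : ∀ ℓ, (Function.support (b ℓ)).Finite)
    (hbank1 : ∀ ω : ℝ × ℝ,
      Complex.normSq (fhat2 a ω) + ∑ ℓ, Complex.normSq (fhat2 (b ℓ) ω) = 1)
    (hbank2 : ∀ ω : ℝ × ℝ,
      (starRingEnd ℂ) (fhat2 a ω) * fhat2 a (ω.1 + π, ω.2 + π)
        + ∑ ℓ, (starRingEnd ℂ) (fhat2 (b ℓ) ω) * fhat2 (b ℓ) (ω.1 + π, ω.2 + π) = 0)
    (hcan : ∀ ω : ℝ × ℝ, fhat2 (b ⟨0, hL⟩) ω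
      = Complex.exp (-(Complex.I) * (ω.1 : ℂ)) * (starRingEnd ℂ) (fhat2 a (ω.1 + π, ω.2 + π)))
    (hnot : ∃ ω₀ : ℝ × ℝ,
      Complex.normSq (fhat2 a ω₀) + Complex.normSq (fhat2 a (ω₀.1 + π, ω₀.2 + π)) ≠ 1) :
    3 ≤ L := by
  obtain ⟨ω₀, hω₀⟩ := hnot
  by_contra hlt
  push_neg at hlt
  -- |exp(-I ω₁)|² = 1
  have hexp : ∀ x : ℝ, Complex.normSq (Complex.exp (-(Complex.I) * (x : ℂ))) = 1 := by
    intro x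
    rw [Complex.normSq_eq_norm_sq, Complex.norm_exp]
    simp
  -- |b̂₁(ω)|² = |â(ω+π)|²
  have hb1sq : ∀ ω : ℝ × ℝ, Complex.normSq (fhat2 (b ⟨0, hL⟩) ω)
      = Complex.normSq (fhat2 a (ω.1 + π, ω.2 + π)) := by
    intro ω
    rw [hcan, Complex.normSq_mul, Complex.normSq_conj, hexp, one_mul]
  -- periodicity of â
  have hper : ∀ ω : ℝ × ℝ, fhat2 a ((ω.1 + π) + π, (ω.2 + π) + π) = fhat2 a ω := by
    intro ω
    have := fhat2_shift2pi a ω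
    rw [show ((ω.1 + π) + π, (ω.2 + π) + π) = (ω.1 + 2 * π, ω.2 + 2 * π) by
      simp [Prod.ext_iff]; constructor <;> ring]
    exact this
  -- the cross term of b₁ cancels that of a
  have hb1cross : ∀ ω : ℝ × ℝ,
      (starRingEnd ℂ) (fhat2 (b ⟨0, hL⟩) ω) * fhat2 (b ⟨0, hL⟩) (ω.1 + π, ω.2 + π)
      = -((starRingEnd ℂ) (fhat2 a ω) * fhat2 a (ω.1 + π, ω.2 + π)) := by
    intro ω
    rw [hcan ω, hcan (ω.1 + π, ω.2 + π)]
    simp only [map_mul, RingHom.id_apply, Complex.conj_conj]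
    rw [hper ω]
    rw [← Complex.exp_conj]
    have h1 : (starRingEnd ℂ) (-(Complex.I) * (ω.1 : ℂ)) = Complex.I * (ω.1 : ℂ) := by
      simp
    rw [h1]
    have h2 : Complex.exp (Complex.I * (ω.1 : ℂ)) *
        Complex.exp (-(Complex.I) * (((ω.1 + π : ℝ)) : ℂ)) = -1 := by
      rw [← Complex.exp_add]
      rw [show Complex.I * (ω.1 : ℂ) + -(Complex.I) * (((ω.1 + π : ℝ)) : ℂ)
          = -((π : ℂ) * Complex.I) by push_cast; ring]
      rw [Complex.exp_neg, Complex.exp_pi_mul_I]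
      norm_num
    calc Complex.exp (Complex.I * (ω.1 : ℂ)) * fhat2 a (ω.1 + π, ω.2 + π) *
        (Complex.exp (-(Complex.I) * (((ω.1 + π : ℝ)) : ℂ)) * (starRingEnd ℂ) (fhat2 a ω))
        = (Complex.exp (Complex.I * (ω.1 : ℂ)) *
            Complex.exp (-(Complex.I) * (((ω.1 + π : ℝ)) : ℂ))) *
          ((starRingEnd ℂ) (fhat2 a ω) * fhat2 a (ω.1 + π, ω.2 + π)) := by ring
      _ = -((starRingEnd ℂ) (fhat2 a ω) * fhat2 a (ω.1 + π, ω.2 + π)) := by rw [h2]; ring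
  interval_cases L
  · -- L = 1
    have h := hbank1 ω₀
    rw [Fin.sum_univ_one] at h
    have e0 : (0 : Fin 1) = ⟨0, hL⟩ := rfl
    rw [e0, hb1sq] at h
    exact hω₀ h
  · -- L = 2
    have e0 : (0 : Fin 2) = ⟨0, hL⟩ := rfl
    -- g(ω) := |b̂₂(ω)|², from hbank1: normSq(â ω) + normSq(â(ω+π)) + g ω = 1
    have hg : ∀ ω : ℝ × ℝ, Complex.normSq (fhat2 a ω)
        + Complex.normSq (fhat2 a (ω.1 + π, ω.2 + π))
        + Complex.normSq (fhat2 (b 1) ω) = 1 := by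
      intro ω
      have h := hbank1 ω
      rw [Fin.sum_univ_two, e0, hb1sq] at h
      linarith
    -- g is π-shift invariant
    have hginv : ∀ ω : ℝ × ℝ, Complex.normSq (fhat2 (b 1) (ω.1 + π, ω.2 + π))
        = Complex.normSq (fhat2 (b 1) ω) := by
      intro ω
      have h1 := hg ω
      have h2 := hg (ω.1 + π, ω.2 + π)
      simp only at h2
      rw [hper ω] at h2
      linarith
    -- cross term for b₂ vanishes
    have hcross : ∀ ω : ℝ × ℝ,
        (starRingEnd ℂ) (fhat2 (b 1) ω) * fhat2 (b 1) (ω.1 + π, ω.2 + π) = 0 := by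
      intro ω
      have h := hbank2 ω
      rw [Fin.sum_univ_two, e0, hb1cross] at h
      linear_combination h
    -- hence b̂₂ ≡ 0
    have hzero : ∀ ω : ℝ × ℝ, Complex.normSq (fhat2 (b 1) ω) = 0 := by
      intro ω
      have := congrArg Complex.normSq (hcross ω)
      rw [Complex.normSq_mul, Complex.normSq_conj, hginv, map_zero] at this
      nlinarith [Complex.normSq_nonneg (fhat2 (b 1) ω)]
    have := hg ω₀
    rw [hzero ω₀] at this
    exact hω₀ (by linarith)
end

section
/- Let s ≥ 1 be an integer, let a, b₂, b₄, …, b_{2s−2} be 2D filters, set b₀ := a, and define b_{2ℓ+1} by b̂_{2ℓ+1}(ω) = e^{−iω₁}·conj(b̂_{2ℓ}(ω+(π,π))) for ℓ = 0, 1, …, s−1. Then {a; b₁, b₂, …, b_{2s−1}} is a quincunx tight framelet filter bank if and only if ∑_{ℓ=1}^{s−1} [ |b̂_{2ℓ}(ω)|² + |b̂_{2ℓ}(ω+(π,π))|² ] = 1 − |â(ω)|² − |â(ω+(π,π))|² for all ω ∈ ℝ². -/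
open Complex Real

lemma fhat2_periodic (a : ℤ × ℤ → ℂ) (ω : ℝ × ℝ) :
    fhat2 a (ω.1 + π + π, ω.2 + π + π) = fhat2 a ω := by
  unfold fhat2
  apply finsum_congr
  intro k
  dsimp only
  congr 1
  have h : (-(Complex.I)) * ((k.1 : ℂ) * ((ω.1 + π + π : ℝ) : ℂ) + (k.2 : ℂ) * ((ω.2 + π + π : ℝ) : ℂ))
      = (-(Complex.I)) * ((k.1 : ℂ) * (ω.1 : ℂ) + (k.2 : ℂ) * (ω.2 : ℂ))
        + ((-(k.1 + k.2) : ℤ) : ℂ) * (2 * (π : ℂ) * Complex.I) := by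
    push_cast
    ring
  rw [h, Complex.exp_add, Complex.exp_int_mul_two_pi_mul_I, mul_one]

lemma normSq_exp_I (x : ℝ) : Complex.normSq (Complex.exp (-(Complex.I) * (x : ℂ))) = 1 := by
  rw [Complex.normSq_eq_norm_sq, Complex.norm_exp]
  simp

lemma key_exp (x : ℝ) :
    (starRingEnd ℂ) (Complex.exp (-(Complex.I) * (x : ℂ)))
      * Complex.exp (-(Complex.I) * ((x + π : ℝ) : ℂ)) = -1 := by
  rw [← Complex.exp_conj, ← Complex.exp_add]
  have h : (starRingEnd ℂ) (-(Complex.I) * (x : ℂ)) + (-(Complex.I) * ((x + π : ℝ) : ℂ))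
      = -((π : ℂ) * Complex.I) := by
    simp only [map_mul, map_neg, Complex.conj_I, Complex.conj_ofReal]
    push_cast
    ring
  rw [h, Complex.exp_neg, Complex.exp_pi_mul_I]
  norm_num

lemma sum_range_two_mul {M : Type*} [AddCommMonoid M] (n : ℕ) (f : ℕ → M) :
    ∑ i ∈ Finset.range (2 * n), f i = ∑ ℓ ∈ Finset.range n, (f (2 * ℓ) + f (2 * ℓ + 1)) := by
  induction n with
  | zero => simp
  | succ n ih =>
    rw [show 2 * (n + 1) = (2 * n + 1) + 1 by ring, Finset.sum_range_succ, Finset.sum_range_succ,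
      ih, Finset.sum_range_succ, add_assoc]

lemma head_split {M : Type*} [AddCommMonoid M] (n : ℕ) (hn : 1 ≤ n) (f : ℕ → M) :
    f 0 + ∑ ℓ ∈ Finset.Icc 1 (n - 1), f ℓ = ∑ i ∈ Finset.range n, f i := by
  obtain ⟨m, rfl⟩ := Nat.exists_eq_add_of_le hn
  simp only [Nat.add_sub_cancel_left]
  induction m with
  | zero => simp
  | succ m ih =>
    rw [Finset.sum_Icc_succ_top (by omega : 1 ≤ m + 1), show 1 + (m + 1) = (1 + m) + 1 by ring,
      Finset.sum_range_succ, ← ih (by omega), add_assoc, add_comm 1 m]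

/-- with `b 0 = a` the low-pass filter, `b (2ℓ)` (ℓ = 1,…,s−1) given filters,
and the odd-indexed filters defined by the canonical relation, the family
`{a; b₁, …, b_{2s−1}}` is a quincunx tight framelet filter bank iff the
sum-of-squares identity holds. -/
theorem stmt_1 (s : ℕ) (hs : 1 ≤ s) (b : ℕ → ℤ × ℤ → ℂ)
    (hfin : ∀ ℓ, (Function.support (b ℓ)).Finite)
    (hodd : ∀ ℓ < s, ∀ ω : ℝ × ℝ, fhat2 (b (2 * ℓ + 1)) ω
      = Complex.exp (-(Complex.I) * (ω.1 : ℂ)) *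
          (starRingEnd ℂ) (fhat2 (b (2 * ℓ)) (ω.1 + π, ω.2 + π))) :
    ((∀ ω : ℝ × ℝ, Complex.normSq (fhat2 (b 0) ω)
        + ∑ ℓ ∈ Finset.Icc 1 (2 * s - 1), Complex.normSq (fhat2 (b ℓ) ω) = 1) ∧
      (∀ ω : ℝ × ℝ, (starRingEnd ℂ) (fhat2 (b 0) ω) * fhat2 (b 0) (ω.1 + π, ω.2 + π)
        + ∑ ℓ ∈ Finset.Icc 1 (2 * s - 1),
            (starRingEnd ℂ) (fhat2 (b ℓ) ω) * fhat2 (b ℓ) (ω.1 + π, ω.2 + π) = 0))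
    ↔ (∀ ω : ℝ × ℝ, ∑ ℓ ∈ Finset.Icc 1 (s - 1),
          (Complex.normSq (fhat2 (b (2 * ℓ)) ω)
            + Complex.normSq (fhat2 (b (2 * ℓ)) (ω.1 + π, ω.2 + π)))
        = 1 - Complex.normSq (fhat2 (b 0) ω)
            - Complex.normSq (fhat2 (b 0) (ω.1 + π, ω.2 + π))) := by
  have hnormodd : ∀ ℓ < s, ∀ ω : ℝ × ℝ,
      Complex.normSq (fhat2 (b (2 * ℓ + 1)) ω)
        = Complex.normSq (fhat2 (b (2 * ℓ)) (ω.1 + π, ω.2 + π)) := by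
    intro ℓ hℓ ω
    rw [hodd ℓ hℓ ω, map_mul, Complex.normSq_conj, normSq_exp_I, one_mul]
  have hpair : ∀ ℓ < s, ∀ ω : ℝ × ℝ,
      (starRingEnd ℂ) (fhat2 (b (2 * ℓ)) ω) * fhat2 (b (2 * ℓ)) (ω.1 + π, ω.2 + π)
        + (starRingEnd ℂ) (fhat2 (b (2 * ℓ + 1)) ω)
            * fhat2 (b (2 * ℓ + 1)) (ω.1 + π, ω.2 + π) = 0 := by
    intro ℓ hℓ ω
    have h1 := hodd ℓ hℓ ω
    have h2 := hodd ℓ hℓ (ω.1 + π, ω.2 + π)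
    simp only at h2
    rw [fhat2_periodic (b (2 * ℓ)) ω] at h2
    rw [h1, h2, map_mul, Complex.conj_conj]
    have hk := key_exp ω.1
    set e1 := (starRingEnd ℂ) (Complex.exp (-(Complex.I) * (ω.1 : ℂ))) with he1
    set e2 := Complex.exp (-(Complex.I) * ((ω.1 + π : ℝ) : ℂ)) with he2
    set X := fhat2 (b (2 * ℓ)) ω
    set X' := fhat2 (b (2 * ℓ)) (ω.1 + π, ω.2 + π)
    have : (e1 * X') * (e2 * (starRingEnd ℂ) X)
        = (e1 * e2) * (X' * (starRingEnd ℂ) X) := by ring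
    rw [this, hk]
    ring
  have hgroup1 : ∀ ω : ℝ × ℝ,
      Complex.normSq (fhat2 (b 0) ω)
          + ∑ ℓ ∈ Finset.Icc 1 (2 * s - 1), Complex.normSq (fhat2 (b ℓ) ω)
        = (Complex.normSq (fhat2 (b 0) ω) + Complex.normSq (fhat2 (b 0) (ω.1 + π, ω.2 + π)))
          + ∑ ℓ ∈ Finset.Icc 1 (s - 1),
              (Complex.normSq (fhat2 (b (2 * ℓ)) ω)
                + Complex.normSq (fhat2 (b (2 * ℓ)) (ω.1 + π, ω.2 + π))) := by
    intro ω
    calc Complex.normSq (fhat2 (b 0) ω)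
          + ∑ ℓ ∈ Finset.Icc 1 (2 * s - 1), Complex.normSq (fhat2 (b ℓ) ω)
        = ∑ i ∈ Finset.range (2 * s), Complex.normSq (fhat2 (b i) ω) :=
          head_split (2 * s) (by omega) (fun i => Complex.normSq (fhat2 (b i) ω))
      _ = ∑ ℓ ∈ Finset.range s,
            (Complex.normSq (fhat2 (b (2 * ℓ)) ω) + Complex.normSq (fhat2 (b (2 * ℓ + 1)) ω)) :=
          sum_range_two_mul s _
      _ = ∑ ℓ ∈ Finset.range s,
            (Complex.normSq (fhat2 (b (2 * ℓ)) ω)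
              + Complex.normSq (fhat2 (b (2 * ℓ)) (ω.1 + π, ω.2 + π))) := by
          refine Finset.sum_congr rfl fun ℓ hℓ => ?_
          rw [hnormodd ℓ (Finset.mem_range.1 hℓ) ω]
      _ = _ := (head_split s hs (fun ℓ => Complex.normSq (fhat2 (b (2 * ℓ)) ω)
            + Complex.normSq (fhat2 (b (2 * ℓ)) (ω.1 + π, ω.2 + π)))).symm
  constructor
  · rintro ⟨h1, _⟩ ω
    have := h1 ω
    rw [hgroup1 ω] at this
    linarith
  · intro h
    constructor
    · intro ω
      rw [hgroup1 ω]
      have := h ω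
      linarith
    · intro ω
      calc (starRingEnd ℂ) (fhat2 (b 0) ω) * fhat2 (b 0) (ω.1 + π, ω.2 + π)
            + ∑ ℓ ∈ Finset.Icc 1 (2 * s - 1),
                (starRingEnd ℂ) (fhat2 (b ℓ) ω) * fhat2 (b ℓ) (ω.1 + π, ω.2 + π)
          = ∑ i ∈ Finset.range (2 * s),
              (starRingEnd ℂ) (fhat2 (b i) ω) * fhat2 (b i) (ω.1 + π, ω.2 + π) :=
            head_split (2 * s) (by omega)
              (fun i => (starRingEnd ℂ) (fhat2 (b i) ω) * fhat2 (b i) (ω.1 + π, ω.2 + π))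
        _ = ∑ ℓ ∈ Finset.range s,
              ((starRingEnd ℂ) (fhat2 (b (2 * ℓ)) ω) * fhat2 (b (2 * ℓ)) (ω.1 + π, ω.2 + π)
                + (starRingEnd ℂ) (fhat2 (b (2 * ℓ + 1)) ω)
                    * fhat2 (b (2 * ℓ + 1)) (ω.1 + π, ω.2 + π)) := sum_range_two_mul s _
        _ = 0 := Finset.sum_eq_zero fun ℓ hℓ => hpair ℓ (Finset.mem_range.1 hℓ) ω
end

section
/- For every integer n ≥ 1, there is at most one 2D filter supported inside ([1−n, n] ∩ ℤ)² that has order 2n sum rules with respect to M_{√2} and order 2n linear-phase moments with phase (1/2, 1/2); that is, if a and a′ are two 2D filters both supported inside ([1−n,n] ∩ ℤ)² with these two properties, then a = a′. -/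
open Complex Real

/-- Order `m` sum rules with respect to the quincunx matrix `M_{√2}`. -/
def SumRules2D (a : ℤ × ℤ → ℂ) (m : ℕ) : Prop :=
  fhat2 a (0, 0) = 1 ∧ ∀ μ : ℕ × ℕ, μ.1 + μ.2 < m →
    ∑ᶠ k : ℤ × ℤ, ((-1 : ℂ) ^ (k.1 + k.2) * a k * (k.1 : ℂ) ^ μ.1 * (k.2 : ℂ) ^ μ.2) = 0

/-- Order `n` linear-phase moments with phase `c ∈ ℝ²`. -/
def LPM2D (a : ℤ × ℤ → ℂ) (n : ℕ) (c : ℝ × ℝ) : Prop :=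
  ∀ μ : ℕ × ℕ, μ.1 + μ.2 < n →
    ∑ᶠ k : ℤ × ℤ, a k * (k.1 : ℂ) ^ μ.1 * (k.2 : ℂ) ^ μ.2
      = ((c.1 : ℂ)) ^ μ.1 * ((c.2 : ℂ)) ^ μ.2


/-!
If `a` and `a'` both qualify, their difference `d` has vanishing moments of order `< 2n`, and by
the sum rules so does `(-1)^(k₁+k₂) d`. Hence the restriction of `d` to either coset of the
quincunx lattice `{k₁ + k₂ even}` has vanishing moments of order `< 2n`.

In the coordinates `u = k₁ + k₂ - 1`, `v = k₁ - k₂` the box `([1-n, n] ∩ ℤ)²` is the diamond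
`|u| + |v| < 2n`, and on a coset `u` and `v` have fixed parities. A point `p` on the outer layer
`|u| + |v| = 2N - 1` of the diamond is isolated, among the coset points of the diamond, by the
polynomial `∏ (u - c) ∏ (v - c')` of degree `2N - 1`, where `c` runs over the integers `c ≠ u_p`
with `c ≡ u_p mod 2`, `|c| ≤ |u_p|` (and `c'` likewise for `v_p`). Pairing it with the moments
gives `d p = 0`; peeling off the layers one by one gives `d = 0`.
-/

namespace Quincunx

open MvPolynomial Finset

def diagU (k : ℤ × ℤ) : ℤ := k.1 + k.2 - 1

def diagV (k : ℤ × ℤ) : ℤ := k.1 - k.2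

def diamondNorm (k : ℤ × ℤ) : ℕ := (diagU k).natAbs + (diagV k).natAbs

lemma eq_of_diagU_eq_of_diagV_eq {k p : ℤ × ℤ} (hu : diagU k = diagU p) (hv : diagV k = diagV p) :
    k = p := by
  simp only [diagU, diagV] at hu hv
  exact Prod.ext (by omega) (by omega)

noncomputable def box (n : ℕ) : Finset (ℤ × ℤ) := Icc (1 - (n : ℤ), 1 - (n : ℤ)) ((n : ℤ), (n : ℤ))

lemma mem_box {n : ℕ} {k : ℤ × ℤ} :
    k ∈ box n ↔ 1 - (n : ℤ) ≤ k.1 ∧ k.1 ≤ n ∧ 1 - (n : ℤ) ≤ k.2 ∧ k.2 ≤ n := by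
  simp only [box, mem_Icc, Prod.le_def]
  tauto

lemma mem_box_iff_diamondNorm_lt {n : ℕ} {k : ℤ × ℤ} : k ∈ box n ↔ diamondNorm k < 2 * n := by
  rw [mem_box]
  unfold diamondNorm diagU diagV
  omega

lemma finsum_eq_sum_box {n : ℕ} {F : ℤ × ℤ → ℂ} (hF : ∀ k ∉ box n, F k = 0) :
    ∑ᶠ k, F k = ∑ k ∈ box n, F k :=
  finsum_eq_sum_of_support_subset F fun k hk => not_not.mp fun hk' => hk (hF k hk')

/-- The integers `c ≠ z` with `c ≡ z [ZMOD 2]` and `|c| ≤ |z|`, namely `z ∓ 2, z ∓ 4, …, -z`. -/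
def nodesBelow (z : ℤ) : Finset ℤ :=
  (range z.natAbs).image fun i : ℕ => z - (if 0 ≤ z then 1 else -1) * 2 * ((i : ℤ) + 1)

lemma card_nodesBelow_le (z : ℤ) : #(nodesBelow z) ≤ z.natAbs :=
  card_image_le.trans (card_range _).le

lemma ne_of_mem_nodesBelow {z c : ℤ} (h : c ∈ nodesBelow z) : c ≠ z := by
  simp only [nodesBelow, mem_image, mem_range] at h
  obtain ⟨i, -, rfl⟩ := h
  split <;> omega

lemma mem_nodesBelow {z c : ℤ} (hne : c ≠ z) (hle : c.natAbs ≤ z.natAbs) (hpar : (c - z) % 2 = 0) :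
    c ∈ nodesBelow z := by
  simp only [nodesBelow, mem_image, mem_range]
  refine ⟨(((if 0 ≤ z then 1 else -1) * (z - c)) / 2 - 1).toNat, ?_, ?_⟩ <;> split <;> omega

def pt (k : ℤ × ℤ) : Fin 2 → ℂ := ![(k.1 : ℂ), (k.2 : ℂ)]

lemma sum_mul_eval_eq_zero_of_moments {T : Finset (ℤ × ℤ)} {f : ℤ × ℤ → ℂ} {D : ℕ}
    (hmom : ∀ i j : ℕ, i + j < D → ∑ k ∈ T, f k * (k.1 : ℂ) ^ i * (k.2 : ℂ) ^ j = 0)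
    (P : MvPolynomial (Fin 2) ℂ) (hP : P.totalDegree < D) :
    ∑ k ∈ T, f k * eval (pt k) P = 0 := by
  simp_rw [eval_eq', Fin.prod_univ_two, mul_sum]
  rw [sum_comm]
  refine sum_eq_zero fun d hd => ?_
  have hdeg : d 0 + d 1 < D := by
    have := le_totalDegree hd
    rw [Finsupp.sum_fintype _ _ fun _ => rfl, Fin.sum_univ_two] at this
    omega
  calc ∑ k ∈ T, f k * (coeff d P * (pt k 0 ^ d 0 * pt k 1 ^ d 1))
      = coeff d P * ∑ k ∈ T, f k * (k.1 : ℂ) ^ d 0 * (k.2 : ℂ) ^ d 1 := by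
        rw [mul_sum]
        refine sum_congr rfl fun k _ => ?_
        simp only [pt, Matrix.cons_val_zero, Matrix.cons_val_one]
        ring
    _ = 0 := by rw [hmom _ _ hdeg, mul_zero]

lemma totalDegree_prod_sub_C_le {P : MvPolynomial (Fin 2) ℂ} (hP : P.totalDegree ≤ 1)
    (s : Finset ℤ) : (∏ c ∈ s, (P - C (c : ℂ))).totalDegree ≤ #s := by
  refine (totalDegree_finsetProd _ _).trans ?_
  simpa only [smul_eq_mul, mul_one] using
    sum_le_card_nsmul s _ 1 fun c _ => (totalDegree_sub_C_le _ _).trans hP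

noncomputable def polyU : MvPolynomial (Fin 2) ℂ := X 0 + X 1 - 1

noncomputable def polyV : MvPolynomial (Fin 2) ℂ := X 0 - X 1

lemma totalDegree_polyU_le : polyU.totalDegree ≤ 1 := by
  refine (totalDegree_sub_C_le _ 1).trans ((totalDegree_add _ _).trans ?_)
  simp [totalDegree_X]

lemma totalDegree_polyV_le : polyV.totalDegree ≤ 1 :=
  (totalDegree_sub _ _).trans (by simp [totalDegree_X])

lemma eval_polyU (k : ℤ × ℤ) : eval (pt k) polyU = diagU k := by
  simp [polyU, pt, diagU]

lemma eval_polyV (k : ℤ × ℤ) : eval (pt k) polyV = diagV k := by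
  simp [polyV, pt, diagV]

noncomputable def nodePoly (p : ℤ × ℤ) : MvPolynomial (Fin 2) ℂ :=
  (∏ c ∈ nodesBelow (diagU p), (polyU - C (c : ℂ))) *
    ∏ c ∈ nodesBelow (diagV p), (polyV - C (c : ℂ))

lemma totalDegree_nodePoly_le (p : ℤ × ℤ) : (nodePoly p).totalDegree ≤ diamondNorm p := by
  refine (totalDegree_mul _ _).trans ?_
  have hU := totalDegree_prod_sub_C_le totalDegree_polyU_le (nodesBelow (diagU p))
  have hV := totalDegree_prod_sub_C_le totalDegree_polyV_le (nodesBelow (diagV p))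
  have := card_nodesBelow_le (diagU p)
  have := card_nodesBelow_le (diagV p)
  unfold diamondNorm
  omega

lemma eval_nodePoly (p k : ℤ × ℤ) :
    eval (pt k) (nodePoly p) =
      (∏ c ∈ nodesBelow (diagU p), ((diagU k : ℂ) - c)) *
        ∏ c ∈ nodesBelow (diagV p), ((diagV k : ℂ) - c) := by
  simp only [nodePoly, map_mul, map_prod, map_sub, eval_C, eval_polyU, eval_polyV]

lemma eval_nodePoly_self_ne_zero (p : ℤ × ℤ) : eval (pt p) (nodePoly p) ≠ 0 := by
  rw [eval_nodePoly]
  refine mul_ne_zero ?_ ?_ <;>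
  · refine prod_ne_zero_iff.mpr fun c hc => sub_ne_zero.mpr ?_
    exact_mod_cast (ne_of_mem_nodesBelow hc).symm

lemma eval_nodePoly_eq_zero {p k : ℤ × ℤ} (hkp : k ≠ p) (hle : diamondNorm k ≤ diamondNorm p)
    (hpar : k.1 + k.2 ≡ p.1 + p.2 [ZMOD 2]) : eval (pt k) (nodePoly p) = 0 := by
  have hU : (diagU k - diagU p) % 2 = 0 := by unfold diagU; unfold Int.ModEq at hpar; omega
  have hV : (diagV k - diagV p) % 2 = 0 := by unfold diagV; unfold Int.ModEq at hpar; omega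
  have vanish_U (hne : diagU k ≠ diagU p) (hle : (diagU k).natAbs ≤ (diagU p).natAbs) :
      eval (pt k) (nodePoly p) = 0 := by
    rw [eval_nodePoly, prod_eq_zero (mem_nodesBelow hne hle hU) (sub_self (diagU k : ℂ)), zero_mul]
  have vanish_V (hne : diagV k ≠ diagV p) (hle : (diagV k).natAbs ≤ (diagV p).natAbs) :
      eval (pt k) (nodePoly p) = 0 := by
    rw [eval_nodePoly, prod_eq_zero (mem_nodesBelow hne hle hV) (sub_self (diagV k : ℂ)), mul_zero]
  unfold diamondNorm at hle
  by_cases hu : diagU k = diagU p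
  · exact vanish_V (fun hv => hkp (eq_of_diagU_eq_of_diagV_eq hu hv)) (by omega)
  by_cases hule : (diagU k).natAbs ≤ (diagU p).natAbs
  · exact vanish_U hu hule
  · exact vanish_V (fun hv => by rw [hv] at hle; omega) (by omega)

variable {s : Finset (ℤ × ℤ)} {f : ℤ × ℤ → ℂ}

lemma apply_eq_zero_of_moments {p : ℤ × ℤ} (hp : p ∈ s)
    (hsupp : ∀ k ∈ s, f k ≠ 0 → diamondNorm k ≤ diamondNorm p ∧ k.1 + k.2 ≡ p.1 + p.2 [ZMOD 2])
    (hmom : ∀ i j : ℕ, i + j ≤ diamondNorm p →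
      ∑ k ∈ s, f k * (k.1 : ℂ) ^ i * (k.2 : ℂ) ^ j = 0) :
    f p = 0 := by
  have hpair := sum_mul_eval_eq_zero_of_moments (D := diamondNorm p + 1)
    (fun i j hij => hmom i j (by omega)) (nodePoly p)
    (Nat.lt_succ_of_le (totalDegree_nodePoly_le p))
  rw [sum_eq_single_of_mem p hp fun k hk hkp => ?_] at hpair
  · exact (mul_eq_zero.mp hpair).resolve_right (eval_nodePoly_self_ne_zero p)
  · by_cases hfk : f k = 0
    · rw [hfk, zero_mul]
    · obtain ⟨hle, hpar⟩ := hsupp k hk hfk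
      rw [eval_nodePoly_eq_zero hkp hle hpar, mul_zero]

theorem eq_zero_of_moments (e : ℤ) (N : ℕ)
    (hsupp : ∀ k ∈ s, f k ≠ 0 → diamondNorm k < 2 * N ∧ k.1 + k.2 ≡ e [ZMOD 2])
    (hmom : ∀ i j : ℕ, i + j < 2 * N → ∑ k ∈ s, f k * (k.1 : ℂ) ^ i * (k.2 : ℂ) ^ j = 0) :
    ∀ k ∈ s, f k = 0 := by
  -- `u + v = 2 k₁ - 1` is odd, so the outer layer of `diamondNorm < 2 (N + 1)` is `2 N + 1`
  have hodd (k : ℤ × ℤ) : diamondNorm k % 2 = 1 := by unfold diamondNorm diagU diagV; omega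
  induction N with
  | zero => exact fun k hk => not_not.mp fun hfk => by simpa using (hsupp k hk hfk).1
  | succ N ih =>
    have outer_eq_zero (p) (hp : p ∈ s) (hpN : diamondNorm p = 2 * N + 1) : f p = 0 := by
      by_contra hfp
      refine hfp (apply_eq_zero_of_moments hp (fun k hk hfk => ⟨?_, ?_⟩)
        (fun i j hij => hmom i j (by omega)))
      · have := (hsupp k hk hfk).1
        omega
      · exact (hsupp k hk hfk).2.trans (hsupp p hp hfp).2.symm
    refine ih (fun k hk hfk => ⟨?_, (hsupp k hk hfk).2⟩) (fun i j hij => hmom i j (by omega))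
    have := (hsupp k hk hfk).1
    have := hodd k
    have : diamondNorm k ≠ 2 * N + 1 := fun h => hfk (outer_eq_zero k hk h)
    omega

def cosetPart (e : ℤ) (d : ℤ × ℤ → ℂ) (k : ℤ × ℤ) : ℂ :=
  if k.1 + k.2 ≡ e [ZMOD 2] then d k else 0

lemma neg_one_zpow_mul_neg_one_zpow (e x : ℤ) :
    (-1 : ℂ) ^ e * (-1) ^ x = if x ≡ e [ZMOD 2] then 1 else -1 := by
  rw [← zpow_add₀ (by norm_num)]
  split_ifs with h <;> unfold Int.ModEq at h
  · exact Even.neg_one_zpow (Int.even_iff.mpr (by omega))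
  · exact Odd.neg_one_zpow (Int.odd_iff.mpr (by omega))

lemma sum_cosetPart_mul (e : ℤ) (d m : ℤ × ℤ → ℂ) :
    ∑ k ∈ s, cosetPart e d k * m k =
      (∑ k ∈ s, d k * m k + (-1) ^ e * ∑ k ∈ s, (-1) ^ (k.1 + k.2) * (d k * m k)) / 2 := by
  rw [mul_sum, ← sum_add_distrib, sum_div]
  refine sum_congr rfl fun k _ => ?_
  have hsign := neg_one_zpow_mul_neg_one_zpow e (k.1 + k.2)
  rw [cosetPart, ← mul_assoc, hsign]
  split_ifs <;> ring

lemma sum_cosetPart_moment_eq_zero {D : ℕ} {d : ℤ × ℤ → ℂ} (e : ℤ)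
    (hmom : ∀ i j : ℕ, i + j < D → ∑ k ∈ s, d k * (k.1 : ℂ) ^ i * (k.2 : ℂ) ^ j = 0)
    (hsigned : ∀ i j : ℕ, i + j < D →
      ∑ k ∈ s, (-1) ^ (k.1 + k.2) * d k * (k.1 : ℂ) ^ i * (k.2 : ℂ) ^ j = 0)
    (i j : ℕ) (hij : i + j < D) :
    ∑ k ∈ s, cosetPart e d k * (k.1 : ℂ) ^ i * (k.2 : ℂ) ^ j = 0 := by
  simp only [mul_assoc] at hmom hsigned ⊢
  rw [sum_cosetPart_mul, hmom i j hij, hsigned i j hij, mul_zero, add_zero, zero_div]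

section Filters

variable {n D : ℕ} {a a' : ℤ × ℤ → ℂ}

lemma sum_box_moment_sub_eq_zero (ha : ∀ k ∉ box n, a k = 0) (ha' : ∀ k ∉ box n, a' k = 0)
    {c : ℝ × ℝ} (hlpm : LPM2D a D c) (hlpm' : LPM2D a' D c) (i j : ℕ) (hij : i + j < D) :
    ∑ k ∈ box n, (a - a') k * (k.1 : ℂ) ^ i * (k.2 : ℂ) ^ j = 0 := by
  have h := hlpm (i, j) hij
  have h' := hlpm' (i, j) hij
  rw [finsum_eq_sum_box (n := n) fun k hk => by simp [ha k hk]] at h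
  rw [finsum_eq_sum_box (n := n) fun k hk => by simp [ha' k hk]] at h'
  dsimp only at h h'
  simp only [Pi.sub_apply, sub_mul, sum_sub_distrib, h, h', sub_self]

lemma sum_box_signed_moment_sub_eq_zero (ha : ∀ k ∉ box n, a k = 0)
    (ha' : ∀ k ∉ box n, a' k = 0) (hsr : SumRules2D a D) (hsr' : SumRules2D a' D)
    (i j : ℕ) (hij : i + j < D) :
    ∑ k ∈ box n, (-1) ^ (k.1 + k.2) * (a - a') k * (k.1 : ℂ) ^ i * (k.2 : ℂ) ^ j = 0 := by
  have h := hsr.2 (i, j) hij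
  have h' := hsr'.2 (i, j) hij
  rw [finsum_eq_sum_box (n := n) fun k hk => by simp [ha k hk]] at h
  rw [finsum_eq_sum_box (n := n) fun k hk => by simp [ha' k hk]] at h'
  dsimp only at h h'
  simp only [Pi.sub_apply, mul_sub, sub_mul, sum_sub_distrib, h, h', sub_self]

end Filters

end Quincunx

open Quincunx in
theorem stmt_3_general (n : ℕ) (a a' : ℤ × ℤ → ℂ)
    (hsupp : ∀ k : ℤ × ℤ, a k ≠ 0 →
      1 - (n : ℤ) ≤ k.1 ∧ k.1 ≤ (n : ℤ) ∧ 1 - (n : ℤ) ≤ k.2 ∧ k.2 ≤ (n : ℤ))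
    (hsupp' : ∀ k : ℤ × ℤ, a' k ≠ 0 →
      1 - (n : ℤ) ≤ k.1 ∧ k.1 ≤ (n : ℤ) ∧ 1 - (n : ℤ) ≤ k.2 ∧ k.2 ≤ (n : ℤ))
    (hsr : SumRules2D a (2 * n)) (hsr' : SumRules2D a' (2 * n))
    (hlpm : LPM2D a (2 * n) (1 / 2, 1 / 2)) (hlpm' : LPM2D a' (2 * n) (1 / 2, 1 / 2)) :
    a = a' := by
  have ha (k : ℤ × ℤ) (hk : k ∉ box n) : a k = 0 :=
    not_not.mp fun h => hk (mem_box.mpr (hsupp k h))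
  have ha' (k : ℤ × ℤ) (hk : k ∉ box n) : a' k = 0 :=
    not_not.mp fun h => hk (mem_box.mpr (hsupp' k h))
  have hpart (e : ℤ) : ∀ k ∈ box n, cosetPart e (a - a') k = 0 :=
    eq_zero_of_moments e n
      (fun k hk hdk => ⟨mem_box_iff_diamondNorm_lt.mp hk, not_not.mp fun h => hdk (if_neg h)⟩)
      (sum_cosetPart_moment_eq_zero e (sum_box_moment_sub_eq_zero ha ha' hlpm hlpm')
        (sum_box_signed_moment_sub_eq_zero ha ha' hsr hsr'))
  funext k
  rw [← sub_eq_zero]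
  by_cases hk : k ∈ box n
  · simpa only [cosetPart, Int.ModEq.refl, if_true, Pi.sub_apply] using hpart (k.1 + k.2) k hk
  · rw [ha k hk, ha' k hk, sub_self]

/-- uniqueness of a 2D filter supported inside `([1−n,n] ∩ ℤ)²` having order `2n`
sum rules with respect to `M_{√2}` and order `2n` linear-phase moments with phase `(1/2,1/2)`. -/
theorem stmt_3 (n : ℕ) (hn : 1 ≤ n) (a a' : ℤ × ℤ → ℂ)
    (hfa : (Function.support a).Finite) (hfa' : (Function.support a').Finite)
    (hsupp : ∀ k : ℤ × ℤ, a k ≠ 0 →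
      1 - (n : ℤ) ≤ k.1 ∧ k.1 ≤ (n : ℤ) ∧ 1 - (n : ℤ) ≤ k.2 ∧ k.2 ≤ (n : ℤ))
    (hsupp' : ∀ k : ℤ × ℤ, a' k ≠ 0 →
      1 - (n : ℤ) ≤ k.1 ∧ k.1 ≤ (n : ℤ) ∧ 1 - (n : ℤ) ≤ k.2 ∧ k.2 ≤ (n : ℤ))
    (hsr : SumRules2D a (2 * n)) (hsr' : SumRules2D a' (2 * n))
    (hlpm : LPM2D a (2 * n) (1 / 2, 1 / 2)) (hlpm' : LPM2D a' (2 * n) (1 / 2, 1 / 2)) :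
    a = a' :=
  stmt_3_general n a a' hsupp hsupp' hsr hsr' hlpm hlpm'
end

section
/- Let u: ℤ → ℂ be a finitely supported 1D filter and define the 2D filter a by â(ω₁,ω₂) = ½[û(ω₁+ω₂) + û(ω₁−ω₂)e^{−iω₂}]. Then for all (ω₁,ω₂) ∈ ℝ²: |â(ω₁,ω₂)|² + |â(ω₁+π, ω₂+π)|² = ½[ |û(ω₁+ω₂)|² + |û(ω₁−ω₂)|² ]. -/
open Complex Real

/-- Fourier series of a finitely supported 1D filter. -/
noncomputable def fhat1 (u : ℤ → ℂ) (ω : ℝ) : ℂ :=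
  ∑ᶠ k : ℤ, u k * Complex.exp (-(Complex.I) * (k : ℂ) * (ω : ℂ))

lemma fhat1_periodic (u : ℤ → ℂ) (ω : ℝ) : fhat1 u (ω + 2 * π) = fhat1 u ω := by
  unfold fhat1
  apply finsum_congr
  intro k
  congr 1
  push_cast
  rw [show -(Complex.I) * (k : ℂ) * ((ω : ℂ) + 2 * (π : ℂ))
      = -(Complex.I) * (k : ℂ) * (ω : ℂ) + ((-k : ℤ) : ℂ) * (2 * (π : ℂ) * Complex.I) by
    push_cast; ring]
  rw [Complex.exp_add, Complex.exp_int_mul_two_pi_mul_I, mul_one]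

lemma normSq_exp_neg_I_real (ω : ℝ) :
    Complex.normSq (Complex.exp (-(Complex.I) * (ω : ℂ))) = 1 := by
  rw [Complex.normSq_eq_norm_sq, Complex.norm_exp]
  simp

/-- for the 2D filter `a` with `â(ω₁,ω₂) = ½[û(ω₁+ω₂) + û(ω₁−ω₂)e^{−iω₂}]`,
`|â(ω₁,ω₂)|² + |â(ω₁+π,ω₂+π)|² = ½[|û(ω₁+ω₂)|² + |û(ω₁−ω₂)|²]`. -/
theorem stmt_5 (u : ℤ → ℂ) (hufin : (Function.support u).Finite)
    (a : ℤ × ℤ → ℂ) (hafin : (Function.support a).Finite)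
    (hfa : ∀ ω : ℝ × ℝ, fhat2 a ω
      = (1 / 2 : ℂ) * (fhat1 u (ω.1 + ω.2)
          + fhat1 u (ω.1 - ω.2) * Complex.exp (-(Complex.I) * (ω.2 : ℂ)))) :
    ∀ ω : ℝ × ℝ,
      Complex.normSq (fhat2 a ω) + Complex.normSq (fhat2 a (ω.1 + π, ω.2 + π))
        = (1 / 2 : ℝ) * (Complex.normSq (fhat1 u (ω.1 + ω.2))
            + Complex.normSq (fhat1 u (ω.1 - ω.2))) := by
  rintro ⟨ω₁, ω₂⟩
  simp only []
  rw [hfa (ω₁, ω₂), hfa (ω₁ + π, ω₂ + π)]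
  simp only []
  have h1 : ω₁ + π + (ω₂ + π) = (ω₁ + ω₂) + 2 * π := by ring
  have h2 : ω₁ + π - (ω₂ + π) = ω₁ - ω₂ := by ring
  rw [h1, h2, fhat1_periodic]
  set A := fhat1 u (ω₁ + ω₂)
  set B := fhat1 u (ω₁ - ω₂)
  have hexp : Complex.exp (-(Complex.I) * ((ω₂ + π : ℝ) : ℂ))
      = - Complex.exp (-(Complex.I) * (ω₂ : ℂ)) := by
    push_cast
    rw [show -(Complex.I) * ((ω₂ : ℂ) + (π : ℂ)) = -(Complex.I) * (ω₂ : ℂ) + (π : ℂ) * Complex.I * (-1) by ring]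
    rw [Complex.exp_add]
    rw [show ((π : ℂ) * Complex.I * (-1)) = -((π : ℂ) * Complex.I) by ring]
    rw [Complex.exp_neg, Complex.exp_pi_mul_I]
    ring_nf
  rw [hexp]
  set E := Complex.exp (-(Complex.I) * (ω₂ : ℂ))
  have hE : Complex.normSq E = 1 := normSq_exp_neg_I_real ω₂
  simp only [Complex.normSq_apply] at *
  push_cast
  set x := A.re; set y := A.im
  set p := B.re; set q := B.im
  set e := E.re; set f := E.im
  simp [Complex.mul_re, Complex.mul_im, Complex.add_re, Complex.add_im, Complex.neg_re, Complex.neg_im]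
  have key : (p * p + q * q) * (e * e + f * f) = p * p + q * q := by rw [hE]; ring
  nlinarith [key]
end

section
/- Let a: ℤ → ℝ be a finitely supported real-valued 1D filter that has symmetry, i.e. there exist ε_a ∈ {1,−1} and c_a ∈ ℤ with a(c_a − k) = ε_a a(k) for all k ∈ ℤ, and suppose 1 − |â(ω)|² − |â(ω+π)|² ≥ 0 for all ω ∈ ℝ. Let u: ℤ → ℝ be finitely supported with |û(2ω)|² = 1 − |â(ω)|² − |â(ω+π)|² for all ω ∈ ℝ, let ε ∈ {1,−1} and let c_b be an odd integer. Define b₂ by b̂₂(ω) := ½(û(2ω) + ε e^{−i c_b ω}·conj(û(2ω))) (a trigonometric polynomial with integer frequencies, hence a 1D filter), and set b̂₁(ω) := e^{−iω}·conj(â(ω+π)), b̂₃(ω) := e^{−iω}·conj(b̂₂(ω+π)). Then {a; b₁, b₂, b₃} is a tight 2-framelet filter bank and each of b₁, b₂, b₃ has symmetry, i.e. for each ℓ ∈ {1,2,3} there exist ε_ℓ ∈ {1,−1} and c_ℓ ∈ ℤ with b_ℓ(c_ℓ − k) = ε_ℓ b_ℓ(k) for all k ∈ ℤ. -/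
open Complex Real

/-!
Call `w` the complement of `v` when `ŵ(ω) = e^{-iω} conj (v̂(ω + π))`; thus `b₁`, `b₃` are the
complements of `a`, `b₂`. For `2π`-periodic `v̂` the complement satisfies
`|ŵ(ω)|² = |v̂(ω + π)|²` and cancels `v̂` in the second framelet identity, so both identities
reduce to `|b̂₂(ω)|² + |b̂₂(ω + π)|² = |û(2ω)|²`. As `c_b` is odd,
`b̂₂(ω + π) = ½ (û(2ω) - ε e^{-i c_b ω} conj (û(2ω)))`, and this is the parallelogram law.

Symmetry `v (c - k) = ε v k` of a finitely supported filter is equivalent to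
`e^{-icω} v̂(-ω) = ε v̂(ω)`, by Dedekind's linear independence of the characters `ω ↦ e^{-ikω}`.
In this form it passes from `v` to its complement with centre `2 - c`, and it holds for `b₂`
with centre `c_b` because `u` is real, so that `conj (û(ω)) = û(-ω)`.
-/

open ComplexConjugate

noncomputable def expChar (k : ℤ) : Multiplicative ℝ →* ℂ where
  toFun ω := exp (-I * k * (ω.toAdd : ℂ))
  map_one' := by simp
  map_mul' x y := by simp [mul_add, Complex.exp_add]

lemma expChar_injective : Function.Injective expChar := by
  intro k m hkm
  by_contra hne
  have hd : ((k - m : ℤ) : ℂ) ≠ 0 := by exact_mod_cast sub_ne_zero.mpr hne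
  have h := DFunLike.congr_fun hkm (Multiplicative.ofAdd (π / (k - m : ℤ)))
  simp only [expChar, MonoidHom.coe_mk, OneHom.coe_mk, toAdd_ofAdd] at h
  have hsplit : -I * k * ((π / (k - m : ℤ) : ℝ) : ℂ)
      = -I * m * ((π / (k - m : ℤ) : ℝ) : ℂ) + -(π * I) := by
    push_cast at hd ⊢
    field_simp
    ring
  rw [hsplit, Complex.exp_add, exp_neg_pi_mul_I] at h
  exact Complex.exp_ne_zero _ (by linear_combination -h / 2)

lemma fhat1_eq_sum (v : ℤ → ℂ) {S : Finset ℤ} (hS : Function.support v ⊆ S) (ω : ℝ) :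
    fhat1 v ω = ∑ k ∈ S, v k * exp (-I * k * ω) :=
  finsum_eq_sum_of_support_subset _ ((Function.support_mul_subset_left _ _).trans hS)

lemma eq_of_fhat1_eq {v w : ℤ → ℂ} (hv : (Function.support v).Finite)
    (hw : (Function.support w).Finite) (h : fhat1 v = fhat1 w) : v = w := by
  classical
  set S := (hv.union hw).toFinset
  have hvS : Function.support v ⊆ S := by simp [S]
  have hwS : Function.support w ⊆ S := by simp [S]
  have hsum : ∑ k ∈ S, (v k - w k) • ⇑(expChar k) = 0 := by
    funext ω
    have := congrFun h ω.toAdd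
    rw [fhat1_eq_sum v hvS, fhat1_eq_sum w hwS] at this
    simpa [expChar, sub_mul, Finset.sum_sub_distrib, sub_eq_zero] using this
  have hcoeff := linearIndependent_iff'.mp
    ((linearIndependent_monoidHom (Multiplicative ℝ) ℂ).comp expChar expChar_injective) S _ hsum
  funext k
  by_cases hk : k ∈ S
  · exact sub_eq_zero.mp (hcoeff k hk)
  · rw [Function.notMem_support.mp (fun h => hk (hvS h)),
      Function.notMem_support.mp (fun h => hk (hwS h))]

lemma fhat1_periodic_s6 (v : ℤ → ℂ) : Function.Periodic (fhat1 v) (2 * π) := by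
  intro ω
  refine finsum_congr fun k => ?_
  rw [show -I * k * ((ω + 2 * π : ℝ) : ℂ) = -I * k * ω + (-k : ℤ) * (2 * π * I) by push_cast; ring,
    Complex.exp_add, exp_int_mul_two_pi_mul_I, mul_one]

lemma fhat1_const_mul (v : ℤ → ℂ) (c : ℂ) (ω : ℝ) :
    fhat1 (fun k => c * v k) ω = c * fhat1 v ω := by
  rw [fhat1, fhat1, mul_finsum]
  exact finsum_congr fun k => mul_assoc _ _ _

lemma fhat1_reflect (v : ℤ → ℂ) (c : ℤ) (ω : ℝ) :
    fhat1 (fun k => v (c - k)) ω = exp (-I * c * ω) * fhat1 v (-ω) := by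
  rw [fhat1, fhat1, mul_finsum, ← finsum_comp_equiv (Equiv.subLeft c)]
  refine finsum_congr fun k => ?_
  simp only [Equiv.subLeft_apply]
  rw [mul_left_comm, ← Complex.exp_add]
  push_cast
  ring_nf

lemma conj_fhat1_ofReal (v : ℤ → ℝ) (ω : ℝ) :
    conj (fhat1 (fun k => (v k : ℂ)) ω) = fhat1 (fun k => (v k : ℂ)) (-ω) := by
  refine ((starRingEnd ℂ).toAddMonoidHom.map_finsum_of_injective (starRingEnd ℂ).injective _).trans
    (finsum_congr fun k => ?_)
  simp [← Complex.exp_conj]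

lemma fhat1_symmetric {v : ℤ → ℂ} {ε : ℂ} {c : ℤ} (hv : ∀ k, v (c - k) = ε * v k) (ω : ℝ) :
    exp (-I * c * ω) * fhat1 v (-ω) = ε * fhat1 v ω := by
  rw [← fhat1_reflect, ← fhat1_const_mul]
  simp only [hv]

lemma symmetric_of_fhat1 {v : ℤ → ℂ} (hv : (Function.support v).Finite) {ε : ℂ} {c : ℤ}
    (h : ∀ ω : ℝ, exp (-I * c * ω) * fhat1 v (-ω) = ε * fhat1 v ω) (k : ℤ) :
    v (c - k) = ε * v k := by
  have hreflect : (Function.support fun k => v (c - k)).Finite :=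
    (hv.image (c - ·)).subset fun k hk => ⟨c - k, hk, sub_sub_cancel c k⟩
  have hscale : (Function.support fun k => ε * v k).Finite :=
    hv.subset (Function.support_mul_subset_right _ _)
  refine congrFun (eq_of_fhat1_eq hreflect hscale (funext fun ω => ?_)) k
  rw [fhat1_reflect, fhat1_const_mul, h]

lemma exp_neg_I_int_mul_add_pi (c : ℤ) (ω : ℝ) :
    exp (-I * c * ((ω + π : ℝ) : ℂ)) = (-1) ^ c * exp (-I * c * ω) := by
  rw [show -I * c * ((ω + π : ℝ) : ℂ) = c * -(π * I) + -I * c * ω by push_cast; ring,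
    Complex.exp_add, exp_int_mul, exp_neg_pi_mul_I]

lemma normSq_exp_neg_I_mul (ω : ℝ) : normSq (exp (-I * ω)) = 1 := by
  rw [normSq_eq_norm_sq, neg_mul, ← mul_neg, ← ofReal_neg, norm_exp_I_mul_ofReal, one_pow]

lemma exp_neg_I_mul_mul_conj (ω : ℝ) : exp (-I * ω) * conj (exp (-I * ω)) = 1 := by
  rw [mul_conj, normSq_exp_neg_I_mul, ofReal_one]

section Complement

variable {V W : ℝ → ℂ}

lemma complement_add_pi (hV : Function.Periodic V (2 * π))
    (hW : ∀ ω, W ω = exp (-I * ω) * conj (V (ω + π))) (ω : ℝ) :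
    W (ω + π) = -exp (-I * ω) * conj (V ω) := by
  have h : exp (-I * ((ω + π : ℝ) : ℂ)) = -exp (-I * ω) := by
    simpa using exp_neg_I_int_mul_add_pi 1 ω
  rw [hW, add_assoc, ← two_mul, hV, h]

lemma normSq_complement (hW : ∀ ω, W ω = exp (-I * ω) * conj (V (ω + π))) (ω : ℝ) :
    normSq (W ω) = normSq (V (ω + π)) := by
  rw [hW, normSq_mul, normSq_exp_neg_I_mul, normSq_conj, one_mul]

lemma conj_mul_add_conj_complement_mul (hV : Function.Periodic V (2 * π))
    (hW : ∀ ω, W ω = exp (-I * ω) * conj (V (ω + π))) (ω : ℝ) :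
    conj (V ω) * V (ω + π) + conj (W ω) * W (ω + π) = 0 := by
  rw [complement_add_pi hV hW, hW, map_mul, conj_conj]
  linear_combination -(conj (V ω) * V (ω + π)) * exp_neg_I_mul_mul_conj ω

lemma complement_symmetric (hV : Function.Periodic V (2 * π))
    (hW : ∀ ω, W ω = exp (-I * ω) * conj (V (ω + π))) {ε : ℂ} {c : ℤ}
    (hsym : ∀ ω : ℝ, exp (-I * c * ω) * V (-ω) = ε * V ω) (ω : ℝ) :
    exp (-I * (2 - c : ℤ) * ω) * W (-ω) = (conj ε * (-1) ^ c) * W ω := by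
  have hVπ : V (-ω + π) = V (-(ω + π)) := by
    rw [show -ω + π = -(ω + π) + 2 * π by ring, hV]
  have hsymπ : conj ε * conj (V (ω + π))
      = (-1) ^ c * exp (I * c * ω) * conj (V (-(ω + π))) := by
    have h := congrArg conj (hsym (ω + π))
    rw [exp_neg_I_int_mul_add_pi] at h
    simp only [map_mul, ← Complex.exp_conj, map_neg, conj_I, map_intCast, conj_ofReal, map_zpow₀,
      map_one, neg_neg] at h
    rw [← h]
  have hexp : exp (-I * (2 - c : ℤ) * ω) * exp (-I * (-ω : ℝ))
      = exp (-I * ω) * exp (I * c * ω) := by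
    rw [← Complex.exp_add, ← Complex.exp_add]
    push_cast
    ring_nf
  have hsq : ((-1 : ℂ) ^ c) * (-1) ^ c = 1 := by
    rw [← mul_zpow]; norm_num
  rw [hW, hW, ← mul_assoc, hexp, hVπ]
  linear_combination -((-1) ^ c * exp (-I * ω)) * hsymπ
    - exp (-I * ω) * exp (I * c * ω) * conj (V (-(ω + π))) * hsq

end Complement

section Symmetrization

variable {X B : ℝ → ℂ} {ε : ℝ} {c : ℤ}

lemma symmetrization_symmetric
    (hB : ∀ ω, B ω = 1 / 2 * (X ω + ε * exp (-I * c * ω) * conj (X ω)))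
    (hε : ε ^ 2 = 1) (hX : ∀ ω, conj (X ω) = X (-ω)) (ω : ℝ) :
    exp (-I * c * ω) * B (-ω) = ε * B ω := by
  have hεC : (ε : ℂ) ^ 2 = 1 := by exact_mod_cast hε
  have hinv : exp (-I * c * ω) * exp (-I * c * (-ω : ℝ)) = 1 := by
    rw [← Complex.exp_add]; push_cast; ring_nf; exact Complex.exp_zero
  rw [hB, hB, ← hX ω, conj_conj]
  linear_combination (1 / 2 * ε * X ω) * hinv - (1 / 2 * exp (-I * c * ω) * conj (X ω)) * hεC

lemma symmetrization_add_pi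
    (hB : ∀ ω, B ω = 1 / 2 * (X ω + ε * exp (-I * c * ω) * conj (X ω)))
    (hX : Function.Periodic X π) (hc : Odd c) (ω : ℝ) :
    B (ω + π) = 1 / 2 * (X ω - ε * exp (-I * c * ω) * conj (X ω)) := by
  rw [hB, hX, exp_neg_I_int_mul_add_pi, hc.neg_one_zpow]
  ring

lemma normSq_symmetrization_add_normSq_add_pi
    (hB : ∀ ω, B ω = 1 / 2 * (X ω + ε * exp (-I * c * ω) * conj (X ω)))
    (hε : ε ^ 2 = 1) (hX : Function.Periodic X π) (hc : Odd c) (ω : ℝ) :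
    normSq (B ω) + normSq (B (ω + π)) = normSq (X ω) := by
  have hY : normSq (ε * exp (-I * c * ω) * conj (X ω)) = normSq (X ω) := by
    rw [normSq_mul, normSq_mul, normSq_ofReal, ← sq, hε, normSq_conj, one_mul,
      show -I * c * (ω : ℂ) = -I * ((c * ω : ℝ) : ℂ) by push_cast; ring, normSq_exp_neg_I_mul,
      one_mul]
  have hhalf : normSq (1 / 2 : ℂ) = 1 / 4 := by norm_num [normSq_apply]
  rw [hB, symmetrization_add_pi hB hX hc, normSq_mul, normSq_mul, normSq_add, normSq_sub, hY,
    hhalf]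
  ring

end Symmetrization

lemma conj_ofReal_mul_neg_one_zpow_eq_one_or {ε : ℝ} (hε : ε = 1 ∨ ε = -1) (c : ℤ) :
    conj (ε : ℂ) * (-1) ^ c = 1 ∨ conj (ε : ℂ) * (-1) ^ c = -1 := by
  rcases hε with rfl | rfl <;> rcases Int.even_or_odd c with hc | hc <;>
    simp [hc.neg_one_zpow]

theorem stmt_6_general (a : ℤ → ℝ)
    (εa : ℝ) (hεa : εa = 1 ∨ εa = -1) (ca : ℤ) (hasym : ∀ k : ℤ, a (ca - k) = εa * a k)
    (u : ℤ → ℝ)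
    (hu : ∀ ω : ℝ, Complex.normSq (fhat1 (fun k => (u k : ℂ)) (2 * ω))
      = 1 - Complex.normSq (fhat1 (fun k => (a k : ℂ)) ω)
          - Complex.normSq (fhat1 (fun k => (a k : ℂ)) (ω + π)))
    (ε : ℝ) (hε : ε = 1 ∨ ε = -1) (cb : ℤ) (hcb : Odd cb)
    (b₁ b₂ b₃ : ℤ → ℂ)
    (hb₁fin : (Function.support b₁).Finite) (hb₂fin : (Function.support b₂).Finite)
    (hb₃fin : (Function.support b₃).Finite)
    (hb₂ : ∀ ω : ℝ, fhat1 b₂ ω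
      = (1 / 2 : ℂ) * (fhat1 (fun k => (u k : ℂ)) (2 * ω)
          + (ε : ℂ) * Complex.exp (-(Complex.I) * (cb : ℂ) * (ω : ℂ)) *
            (starRingEnd ℂ) (fhat1 (fun k => (u k : ℂ)) (2 * ω))))
    (hb₁ : ∀ ω : ℝ, fhat1 b₁ ω
      = Complex.exp (-(Complex.I) * (ω : ℂ)) *
          (starRingEnd ℂ) (fhat1 (fun k => (a k : ℂ)) (ω + π)))
    (hb₃ : ∀ ω : ℝ, fhat1 b₃ ω
      = Complex.exp (-(Complex.I) * (ω : ℂ)) * (starRingEnd ℂ) (fhat1 b₂ (ω + π))) :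
    -- {a; b₁, b₂, b₃} is a tight 2-framelet filter bank
    ((∀ ω : ℝ, Complex.normSq (fhat1 (fun k => (a k : ℂ)) ω) + Complex.normSq (fhat1 b₁ ω)
        + Complex.normSq (fhat1 b₂ ω) + Complex.normSq (fhat1 b₃ ω) = 1) ∧
      (∀ ω : ℝ, (starRingEnd ℂ) (fhat1 (fun k => (a k : ℂ)) ω) *
            fhat1 (fun k => (a k : ℂ)) (ω + π)
        + (starRingEnd ℂ) (fhat1 b₁ ω) * fhat1 b₁ (ω + π)
        + (starRingEnd ℂ) (fhat1 b₂ ω) * fhat1 b₂ (ω + π)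
        + (starRingEnd ℂ) (fhat1 b₃ ω) * fhat1 b₃ (ω + π) = 0)) ∧
    -- each of b₁, b₂, b₃ has symmetry
    ((∃ ε₁ : ℂ, (ε₁ = 1 ∨ ε₁ = -1) ∧ ∃ c₁ : ℤ, ∀ k : ℤ, b₁ (c₁ - k) = ε₁ * b₁ k) ∧
      (∃ ε₂ : ℂ, (ε₂ = 1 ∨ ε₂ = -1) ∧ ∃ c₂ : ℤ, ∀ k : ℤ, b₂ (c₂ - k) = ε₂ * b₂ k) ∧
      (∃ ε₃ : ℂ, (ε₃ = 1 ∨ ε₃ = -1) ∧ ∃ c₃ : ℤ, ∀ k : ℤ, b₃ (c₃ - k) = ε₃ * b₃ k)) := by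
  have hε2 : ε ^ 2 = 1 := by rcases hε with rfl | rfl <;> norm_num
  have hUper : Function.Periodic (fun ω => fhat1 (fun k => (u k : ℂ)) (2 * ω)) π := fun ω => by
    simpa only [mul_add] using fhat1_periodic_s6 _ (2 * ω)
  have hUconj (ω : ℝ) : conj (fhat1 (fun k => (u k : ℂ)) (2 * ω))
      = fhat1 (fun k => (u k : ℂ)) (2 * -ω) := by
    rw [conj_fhat1_ofReal, mul_neg]
  have hasymC : ∀ k, (a (ca - k) : ℂ) = εa * a k := fun k => by exact_mod_cast hasym k
  have hsym₂ := symmetric_of_fhat1 hb₂fin (symmetrization_symmetric hb₂ hε2 hUconj)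
  refine ⟨⟨fun ω => ?_, fun ω => ?_⟩, ?_, ?_, ?_⟩
  · rw [normSq_complement hb₁, normSq_complement hb₃]
    linarith [normSq_symmetrization_add_normSq_add_pi hb₂ hε2 hUper hcb ω, hu ω]
  · linear_combination conj_mul_add_conj_complement_mul (fhat1_periodic_s6 _) hb₁ ω
      + conj_mul_add_conj_complement_mul (fhat1_periodic_s6 _) hb₃ ω
  · exact ⟨_, conj_ofReal_mul_neg_one_zpow_eq_one_or hεa ca, 2 - ca, symmetric_of_fhat1 hb₁fin
      (complement_symmetric (fhat1_periodic_s6 _) hb₁ (fhat1_symmetric hasymC))⟩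
  · exact ⟨ε, by rcases hε with rfl | rfl <;> simp, cb, hsym₂⟩
  · exact ⟨_, conj_ofReal_mul_neg_one_zpow_eq_one_or hε cb, 2 - cb, symmetric_of_fhat1 hb₃fin
      (complement_symmetric (fhat1_periodic_s6 _) hb₃ (fhat1_symmetric hsym₂))⟩

/-- construction of double canonical tight 2-framelet filter banks with symmetry
(case 1 of Theorem `thm:double:2`). -/
theorem stmt_6 (a : ℤ → ℝ) (hafin : (Function.support a).Finite)
    (εa : ℝ) (hεa : εa = 1 ∨ εa = -1) (ca : ℤ) (hasym : ∀ k : ℤ, a (ca - k) = εa * a k)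
    (hpos : ∀ ω : ℝ, 0 ≤ 1 - Complex.normSq (fhat1 (fun k => (a k : ℂ)) ω)
        - Complex.normSq (fhat1 (fun k => (a k : ℂ)) (ω + π)))
    (u : ℤ → ℝ) (hufin : (Function.support u).Finite)
    (hu : ∀ ω : ℝ, Complex.normSq (fhat1 (fun k => (u k : ℂ)) (2 * ω))
      = 1 - Complex.normSq (fhat1 (fun k => (a k : ℂ)) ω)
          - Complex.normSq (fhat1 (fun k => (a k : ℂ)) (ω + π)))
    (ε : ℝ) (hε : ε = 1 ∨ ε = -1) (cb : ℤ) (hcb : Odd cb)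
    (b₁ b₂ b₃ : ℤ → ℂ)
    (hb₁fin : (Function.support b₁).Finite) (hb₂fin : (Function.support b₂).Finite)
    (hb₃fin : (Function.support b₃).Finite)
    (hb₂ : ∀ ω : ℝ, fhat1 b₂ ω
      = (1 / 2 : ℂ) * (fhat1 (fun k => (u k : ℂ)) (2 * ω)
          + (ε : ℂ) * Complex.exp (-(Complex.I) * (cb : ℂ) * (ω : ℂ)) *
            (starRingEnd ℂ) (fhat1 (fun k => (u k : ℂ)) (2 * ω))))
    (hb₁ : ∀ ω : ℝ, fhat1 b₁ ω
      = Complex.exp (-(Complex.I) * (ω : ℂ)) *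
          (starRingEnd ℂ) (fhat1 (fun k => (a k : ℂ)) (ω + π)))
    (hb₃ : ∀ ω : ℝ, fhat1 b₃ ω
      = Complex.exp (-(Complex.I) * (ω : ℂ)) * (starRingEnd ℂ) (fhat1 b₂ (ω + π))) :
    -- {a; b₁, b₂, b₃} is a tight 2-framelet filter bank
    ((∀ ω : ℝ, Complex.normSq (fhat1 (fun k => (a k : ℂ)) ω) + Complex.normSq (fhat1 b₁ ω)
        + Complex.normSq (fhat1 b₂ ω) + Complex.normSq (fhat1 b₃ ω) = 1) ∧
      (∀ ω : ℝ, (starRingEnd ℂ) (fhat1 (fun k => (a k : ℂ)) ω) *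
            fhat1 (fun k => (a k : ℂ)) (ω + π)
        + (starRingEnd ℂ) (fhat1 b₁ ω) * fhat1 b₁ (ω + π)
        + (starRingEnd ℂ) (fhat1 b₂ ω) * fhat1 b₂ (ω + π)
        + (starRingEnd ℂ) (fhat1 b₃ ω) * fhat1 b₃ (ω + π) = 0)) ∧
    -- each of b₁, b₂, b₃ has symmetry
    ((∃ ε₁ : ℂ, (ε₁ = 1 ∨ ε₁ = -1) ∧ ∃ c₁ : ℤ, ∀ k : ℤ, b₁ (c₁ - k) = ε₁ * b₁ k) ∧
      (∃ ε₂ : ℂ, (ε₂ = 1 ∨ ε₂ = -1) ∧ ∃ c₂ : ℤ, ∀ k : ℤ, b₂ (c₂ - k) = ε₂ * b₂ k) ∧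
      (∃ ε₃ : ℂ, (ε₃ = 1 ∨ ε₃ = -1) ∧ ∃ c₃ : ℤ, ∀ k : ℤ, b₃ (c₃ - k) = ε₃ * b₃ k)) :=
  stmt_6_general a εa hεa ca hasym u hu ε hε cb hcb b₁ b₂ b₃ hb₁fin hb₂fin hb₃fin hb₂ hb₁ hb₃
end

section
/- Let u: ℤ → ℂ be a finitely supported 1D filter with û(0) = 1, let n ≥ 1, and let a^{2D} be the 2D filter defined by â^{2D}(ω₁,ω₂) = ½[û(ω₁+ω₂) + û(ω₁−ω₂)e^{−iω₂}]. Then a^{2D} has order n linear-phase moments with phase (1/2, 1/2) if and only if u has order n linear-phase moments with phase 1/2. -/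
/-!
Differentiating the relation `â(ω₁, ω₂) = ½ (û(ω₁ + ω₂) + û(ω₁ - ω₂) e^{-iω₂})` `p` times in `ω₁`
and `q` times in `ω₂` at the origin, where every Fourier series is a finite exponential sum, gives
`∑ a(k) k₁^p k₂^q = ½ ∑ u(k) (k^{p+q} + k^p (1 - k)^q)`: the second term is the Fourier series of
`u` pushed forward along `k ↦ (k, 1 - k)`. For `q = 0` the right side is the `p`-th moment of `u`.
Conversely, order `n` linear-phase moments say that `u` integrates every polynomial of degree `< n`
as the point mass at `1/2` does, which evaluates the right side to `(1/2)^p (1/2)^q`.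
-/

open Complex Real

/-- A 1D filter has order `n` linear-phase moments with phase `1/2`. -/
def LPM1D (u : ℤ → ℂ) (n : ℕ) : Prop :=
  ∀ j : ℕ, j < n → ∑ᶠ k : ℤ, u k * (k : ℂ) ^ j = (1 / 2 : ℂ) ^ j

open Finset Polynomial

theorem finsum_mul_eq_sum_toFinset {α R : Type*} [NonUnitalNonAssocSemiring R]
    {u : α → R} (hu : (Function.support u).Finite) (g : α → R) :
    ∑ᶠ k, u k * g k = ∑ k ∈ hu.toFinset, u k * g k :=
  finsum_eq_sum_of_support_subset _ (by simpa using Function.support_mul_subset_left u g)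

theorem iteratedDeriv_sum_mul_cexp {ι : Type*} (F : Finset ι) (c γ : ι → ℂ) (m : ℕ) :
    iteratedDeriv m (fun s : ℝ => ∑ k ∈ F, c k * cexp (γ k * s)) =
      fun s : ℝ => ∑ k ∈ F, c k * γ k ^ m * cexp (γ k * s) := by
  induction m generalizing c with
  | zero => simp
  | succ m ih =>
    have hderiv : deriv (fun s : ℝ => ∑ k ∈ F, c k * cexp (γ k * s)) =
        fun s : ℝ => ∑ k ∈ F, (c k * γ k) * cexp (γ k * s) := by
      funext s
      refine (HasDerivAt.fun_sum fun k _ => ?_).deriv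
      have hlin : HasDerivAt (fun s : ℝ => γ k * s) (γ k) s := by
        simpa using (hasDerivAt_id s).ofReal_comp.const_mul (γ k)
      exact (hlin.cexp.const_mul (c k)).congr_deriv (by ring)
    rw [iteratedDeriv_succ', hderiv, ih]
    simp only [mul_assoc, ← pow_succ']

theorem sum_mul_pow_eq_of_sum_mul_cexp_eq {ι κ : Type*} {F : Finset ι} {G : Finset κ}
    {c γ : ι → ℂ} {d δ : κ → ℂ}
    (h : ∀ s : ℝ, ∑ k ∈ F, c k * cexp (γ k * s) = ∑ k ∈ G, d k * cexp (δ k * s)) (m : ℕ) :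
    ∑ k ∈ F, c k * γ k ^ m = ∑ k ∈ G, d k * δ k ^ m := by
  have h0 := congrFun (congrArg (iteratedDeriv m) (funext h)) 0
  simpa only [iteratedDeriv_sum_mul_cexp, ofReal_zero, mul_zero, Complex.exp_zero, mul_one] using h0

theorem sum_mul_pow_mul_pow_eq_of_sum_mul_cexp_eq {ι κ : Type*} {F : Finset ι} {G : Finset κ}
    {c α β : ι → ℂ} {d α' β' : κ → ℂ}
    (h : ∀ s t : ℝ, ∑ k ∈ F, c k * cexp (α k * s + β k * t)
      = ∑ k ∈ G, d k * cexp (α' k * s + β' k * t)) (p q : ℕ) :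
    ∑ k ∈ F, c k * α k ^ p * β k ^ q = ∑ k ∈ G, d k * α' k ^ p * β' k ^ q := by
  have hq (s : ℝ) : ∑ k ∈ F, c k * cexp (α k * s) * β k ^ q
      = ∑ k ∈ G, d k * cexp (α' k * s) * β' k ^ q :=
    sum_mul_pow_eq_of_sum_mul_cexp_eq
      (fun t => by simpa only [Complex.exp_add, mul_assoc] using h s t) q
  have hp := sum_mul_pow_eq_of_sum_mul_cexp_eq (c := fun k => c k * β k ^ q)
    (d := fun k => d k * β' k ^ q) (fun s => by simpa only [mul_right_comm] using hq s) p
  simpa only [mul_right_comm] using hp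

theorem finsum_mul_eval_eq_eval {α : Type*} {u : α → ℂ} (hu : (Function.support u).Finite)
    (x : α → ℂ) {c : ℂ} {n : ℕ} (hmom : ∀ j < n, ∑ᶠ k, u k * x k ^ j = c ^ j)
    {P : ℂ[X]} (hP : P.natDegree < n) :
    ∑ᶠ k, u k * P.eval (x k) = P.eval c := by
  simp only [finsum_mul_eq_sum_toFinset hu] at hmom ⊢
  calc ∑ k ∈ hu.toFinset, u k * P.eval (x k)
      = ∑ j ∈ range n, P.coeff j * ∑ k ∈ hu.toFinset, u k * x k ^ j := by
        simp only [eval_eq_sum_range' hP, mul_sum]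
        rw [sum_comm]
        exact sum_congr rfl fun _ _ => sum_congr rfl fun _ _ => by ring
    _ = P.eval c := by
        rw [eval_eq_sum_range' hP]
        exact sum_congr rfl fun j hj => by rw [hmom j (mem_range.mp hj)]

theorem sum_mul_cexp_eq_of_fhat2_eq {u : ℤ → ℂ} (hufin : (Function.support u).Finite)
    {a : ℤ × ℤ → ℂ} (hafin : (Function.support a).Finite)
    (hfa : ∀ ω : ℝ × ℝ, fhat2 a ω
      = (1 / 2 : ℂ) * (fhat1 u (ω.1 + ω.2) + fhat1 u (ω.1 - ω.2) * cexp (-I * ω.2)))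
    (s t : ℝ) :
    ∑ k ∈ hafin.toFinset, a k * cexp (-I * k.1 * s + -I * k.2 * t)
      = ∑ x ∈ hufin.toFinset.disjSum hufin.toFinset,
          Sum.elim (fun k => u k / 2) (fun k => u k / 2) x
            * cexp (Sum.elim (fun k : ℤ => -I * k) (fun k : ℤ => -I * k) x * s
              + Sum.elim (fun k : ℤ => -I * k) (fun k : ℤ => -I * (1 - k)) x * t) := by
  have h := hfa (s, t)
  simp only [fhat2, fhat1, finsum_mul_eq_sum_toFinset hafin,
    finsum_mul_eq_sum_toFinset hufin] at h
  simp only [sum_disjSum, Sum.elim_inl, Sum.elim_inr]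
  calc ∑ k ∈ hafin.toFinset, a k * cexp (-I * k.1 * s + -I * k.2 * t)
      = ∑ k ∈ hafin.toFinset, a k * cexp (-I * (k.1 * s + k.2 * t)) :=
        sum_congr rfl fun k _ => by ring_nf
    _ = _ := h
    _ = _ := by
        rw [sum_mul, mul_add, mul_sum, mul_sum]
        congr 1 <;> refine sum_congr rfl fun k _ => ?_
        · push_cast; ring_nf
        · rw [mul_assoc, ← Complex.exp_add]; push_cast; ring_nf

theorem finsum_moment_eq_of_fhat2_eq {u : ℤ → ℂ} (hufin : (Function.support u).Finite)
    {a : ℤ × ℤ → ℂ} (hafin : (Function.support a).Finite)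
    (hfa : ∀ ω : ℝ × ℝ, fhat2 a ω
      = (1 / 2 : ℂ) * (fhat1 u (ω.1 + ω.2) + fhat1 u (ω.1 - ω.2) * cexp (-I * ω.2)))
    (p q : ℕ) :
    ∑ᶠ k : ℤ × ℤ, a k * (k.1 : ℂ) ^ p * (k.2 : ℂ) ^ q
      = ∑ᶠ k : ℤ, u k * (((k : ℂ) ^ (p + q) + (k : ℂ) ^ p * (1 - k) ^ q) / 2) := by
  have hmom := sum_mul_pow_mul_pow_eq_of_sum_mul_cexp_eq
    (sum_mul_cexp_eq_of_fhat2_eq hufin hafin hfa) p q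
  simp only [sum_disjSum, Sum.elim_inl, Sum.elim_inr] at hmom
  simp only [mul_assoc, finsum_mul_eq_sum_toFinset hafin, finsum_mul_eq_sum_toFinset hufin]
  refine mul_left_cancel₀ (pow_ne_zero (p + q) (neg_ne_zero.mpr I_ne_zero)) ?_
  calc (-I) ^ (p + q) * ∑ k ∈ hafin.toFinset, a k * ((k.1 : ℂ) ^ p * (k.2 : ℂ) ^ q)
      = ∑ k ∈ hafin.toFinset, a k * (-I * k.1) ^ p * (-I * k.2) ^ q := by
        rw [mul_sum]; exact sum_congr rfl fun k _ => by ring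
    _ = _ := hmom
    _ = _ := by
        rw [mul_sum, ← sum_add_distrib]
        exact sum_congr rfl fun k _ => by simp only [mul_pow]; ring

theorem stmt_8_general (u : ℤ → ℂ) (hufin : (Function.support u).Finite)
    (n : ℕ)
    (a : ℤ × ℤ → ℂ) (hafin : (Function.support a).Finite)
    (hfa : ∀ ω : ℝ × ℝ, fhat2 a ω
      = (1 / 2 : ℂ) * (fhat1 u (ω.1 + ω.2)
          + fhat1 u (ω.1 - ω.2) * Complex.exp (-(Complex.I) * (ω.2 : ℂ)))) :
    LPM2D a n (1 / 2, 1 / 2) ↔ LPM1D u n := by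
  have hmom := finsum_moment_eq_of_fhat2_eq hufin hafin hfa
  constructor
  · intro h2 j hj
    have hj0 := h2 (j, 0) (by simpa using hj)
    rw [hmom] at hj0
    convert hj0 using 1
    · exact finsum_congr fun k => by ring
    · push_cast; ring
  · intro h1 μ hμ
    have hP : (C (1 / 2 : ℂ) * (X ^ (μ.1 + μ.2) + X ^ μ.1 * (1 - X) ^ μ.2)).natDegree < n :=
      lt_of_le_of_lt (by compute_degree) hμ
    have heval := finsum_mul_eval_eq_eval hufin (fun k : ℤ => (k : ℂ)) h1 hP
    simp only [eval_mul, eval_C, eval_add, eval_pow, eval_X, eval_sub, eval_one] at heval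
    rw [hmom]
    convert heval using 1
    · exact finsum_congr fun k => by ring
    · push_cast; ring

/-- `a^{2D}` has order `n` linear-phase moments with phase `(1/2,1/2)` iff `u`
has order `n` linear-phase moments with phase `1/2`. -/
theorem stmt_8 (u : ℤ → ℂ) (hufin : (Function.support u).Finite) (hu0 : fhat1 u 0 = 1)
    (n : ℕ) (hn : 1 ≤ n)
    (a : ℤ × ℤ → ℂ) (hafin : (Function.support a).Finite)
    (hfa : ∀ ω : ℝ × ℝ, fhat2 a ω
      = (1 / 2 : ℂ) * (fhat1 u (ω.1 + ω.2)
          + fhat1 u (ω.1 - ω.2) * Complex.exp (-(Complex.I) * (ω.2 : ℂ)))) :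
    LPM2D a n (1 / 2, 1 / 2) ↔ LPM1D u n :=
  stmt_8_general u hufin n a hafin hfa
end

section
/- Let d ≥ 1, and let u, v: ℤ → ℂ be finitely supported 1D filters with |û(ω)|² + |v̂(ω)|² = 1 for all ω ∈ ℝ. Let M be a d×d integer matrix with |det M| = 2, let ξ ∈ ℝ^d satisfy M^⊤ξ ∈ ℤ^d and ξ ∉ ℤ^d, let γ₁, γ₂ ∈ Mℤ^d \ {0}, and let γ₃, γ₄ ∈ ℤ^d \ Mℤ^d. Define d-dimensional filters by â(ω) = ½[û(γ₁·ω) + û(γ₂·ω)e^{−iγ₃·ω}], b̂₁(ω) = e^{−iγ₄·ω}·conj(â(ω+2πξ)), b̂₂(ω) = ½[v̂(γ₁·ω) + v̂(γ₂·ω)e^{−iγ₃·ω}], b̂₃(ω) = e^{−iγ₄·ω}·conj(b̂₂(ω+2πξ)). Then for all ω ∈ ℝ^d: |â(ω)|² + ∑_{ℓ=1}^{3} |b̂_ℓ(ω)|² = 1 and conj(â(ω))·â(ω+2πξ) + ∑_{ℓ=1}^{3} conj(b̂_ℓ(ω))·b̂_ℓ(ω+2πξ) = 0; that is, {a; b₁,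 b₂, b₃} is a tight M-framelet filter bank. -/
open Complex Real

/-- Fourier series of a finitely supported d-dimensional filter. -/
noncomputable def fhatD {d : ℕ} (a : (Fin d → ℤ) → ℂ) (ω : Fin d → ℝ) : ℂ :=
  ∑ᶠ k : Fin d → ℤ, a k * Complex.exp (-(Complex.I) * (∑ i, (k i : ℂ) * ((ω i : ℝ) : ℂ)))

/-- The dot product `γ·ω` of an integer vector with a real vector. -/
def dotZR {d : ℕ} (γ : Fin d → ℤ) (ω : Fin d → ℝ) : ℝ :=
  ∑ i, (γ i : ℝ) * ω i

/- ## Auxiliary lemmas -/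

lemma fhat1_per (u : ℤ → ℂ) (ω : ℝ) (n : ℤ) : fhat1 u (ω + 2 * π * n) = fhat1 u ω := by
  unfold fhat1
  apply finsum_congr
  intro k
  congr 1
  have h : (-(Complex.I) * (k:ℂ) * ((ω + 2*π*(n:ℝ) : ℝ):ℂ))
      = -(Complex.I) * (k:ℂ) * (ω:ℂ) + ((-(k*n) : ℤ):ℂ) * (2*(π:ℂ)*Complex.I) := by
    push_cast; ring
  rw [h, Complex.exp_add, Complex.exp_int_mul_two_pi_mul_I, mul_one]

lemma exp_shift_int (x : ℝ) (n : ℤ) :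
    Complex.exp (-(Complex.I) * ((x + 2*π*(n:ℝ) : ℝ):ℂ)) = Complex.exp (-(Complex.I) * (x:ℂ)) := by
  have h : (-(Complex.I) * ((x + 2*π*(n:ℝ) : ℝ):ℂ))
      = -(Complex.I) * (x:ℂ) + ((-n : ℤ):ℂ) * (2*(π:ℂ)*Complex.I) := by
    push_cast; ring
  rw [h, Complex.exp_add, Complex.exp_int_mul_two_pi_mul_I, mul_one]

lemma exp_shift_half (x : ℝ) (n : ℤ) :
    Complex.exp (-(Complex.I) * ((x + 2*π*((n:ℝ) + 1/2) : ℝ):ℂ))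
      = - Complex.exp (-(Complex.I) * (x:ℂ)) := by
  have h : (-(Complex.I) * ((x + 2*π*((n:ℝ)+1/2) : ℝ):ℂ))
      = -(Complex.I)*(x:ℂ) + ((-(n+1) : ℤ):ℂ) * (2*(π:ℂ)*Complex.I) + (π:ℂ)*Complex.I := by
    push_cast; ring
  rw [h, Complex.exp_add, Complex.exp_add, Complex.exp_int_mul_two_pi_mul_I, mul_one,
    Complex.exp_pi_mul_I]
  ring

lemma conj_exp_unit (x : ℝ) :
    (starRingEnd ℂ) (Complex.exp (-(Complex.I) * (x:ℂ))) * Complex.exp (-(Complex.I) * (x:ℂ)) = 1 := by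
  rw [← Complex.exp_conj, ← Complex.exp_add]
  have h : (starRingEnd ℂ) (-(Complex.I) * (x:ℂ)) + (-(Complex.I) * (x:ℂ)) = 0 := by
    simp [map_mul, Complex.conj_I, Complex.conj_ofReal]
  rw [h, Complex.exp_zero]

lemma dot_shift {d : ℕ} (γ : Fin d → ℤ) (ξ ω : Fin d → ℝ) :
    dotZR γ (fun i => ω i + 2*π*ξ i) = dotZR γ ω + 2*π*dotZR γ ξ := by
  unfold dotZR
  rw [Finset.mul_sum, ← Finset.sum_add_distrib]
  apply Finset.sum_congr rfl; intros; ring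

lemma adj_eq_zero_of_two_ker {d : ℕ} (N : Matrix (Fin d) (Fin d) (ZMod 2))
    (x y : Fin d → ZMod 2) (hx : N.mulVec x = 0) (hy : N.mulVec y = 0)
    (hx0 : x ≠ 0) (hy0 : y ≠ 0) (hxy : x ≠ y) : N.adjugate = 0 := by
  have key : ∀ (i j : Fin d) (t : Fin d → ZMod 2), t ≠ 0 → t i = 0 → N.mulVec t = 0 →
      N.adjugate i j = 0 := by
    intro i j t ht0 hti hNt
    rw [Matrix.adjugate_apply]
    refine (Matrix.exists_mulVec_eq_zero_iff).mp ⟨t, ht0, ?_⟩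
    funext k
    by_cases hk : k = j
    · subst hk
      show ∑ l, (N.updateRow k (Pi.single i 1)) k l * t l = 0
      simp [Matrix.updateRow_self, Pi.single_apply, ite_mul, hti]
    · show ∑ l, (N.updateRow j (Pi.single i 1)) k l * t l = 0
      have := congrFun hNt k
      simpa [Matrix.updateRow_ne hk, Matrix.mulVec, dotProduct] using this
  ext i j
  by_cases hxi : x i = 0
  · exact key i j x hx0 hxi hx
  by_cases hyi : y i = 0
  · exact key i j y hy0 hyi hy
  · refine key i j (x + y) ?_ ?_ ?_
    · intro h
      apply hxy
      funext l
      have := congrFun h l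
      have h2 : ∀ a b : ZMod 2, a + b = 0 → a = b := by decide
      exact h2 _ _ this
    · have h2 : ∀ a b : ZMod 2, a ≠ 0 → b ≠ 0 → a + b = 0 := by decide
      exact h2 _ _ hxi hyi
    · rw [Matrix.mulVec_add, hx, hy, add_zero]

lemma cast_mulVec {d : ℕ} (A : Matrix (Fin d) (Fin d) ℤ) (v : Fin d → ℤ) :
    (A.map (Int.cast : ℤ → ZMod 2)).mulVec (fun i => ((v i : ZMod 2))) =
      fun k => (((A.mulVec v) k : ℤ) : ZMod 2) := by
  funext k
  simp [Matrix.mulVec, dotProduct, Matrix.map_apply]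

lemma cast_mulVecR {d : ℕ} (A : Matrix (Fin d) (Fin d) ℤ) (v : Fin d → ℤ) :
    (A.map (Int.cast : ℤ → ℝ)).mulVec (fun i => ((v i : ℝ))) =
      fun k => (((A.mulVec v) k : ℤ) : ℝ) := by
  funext k
  simp [Matrix.mulVec, dotProduct, Matrix.map_apply]

lemma mem_lattice_of_even {d : ℕ} (M : Matrix (Fin d) (Fin d) ℤ) (eps : ℤ)
    (heps : eps = 1 ∨ eps = -1) (hdeteps : M.det = 2 * eps)
    (w z : Fin d → ℤ) (i0 : Fin d)
    (hw : (Matrix.adjugate M.transpose).mulVec z = fun i => eps * w i)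
    (hi0 : ¬ (2 ∣ w i0)) (γ : Fin d → ℤ) (hγ : 2 ∣ ∑ i, γ i * w i) :
    ∃ m, γ = M.mulVec m := by
  classical
  have hcast0 : ∀ n : ℤ, 2 ∣ n → ((n : ZMod 2) = 0) :=
    fun n h => (ZMod.intCast_zmod_eq_zero_iff_dvd n 2).mpr h
  have heps2 : eps * eps = 1 := by rcases heps with h | h <;> rw [h] <;> norm_num
  set c : Fin d → ℤ := M.adjugate.mulVec γ with hc
  set u : Fin d → ℤ := fun i => M.adjugate i i0 with hu
  have hwk : ∀ k, ∑ i, M.adjugate i k * z i = eps * w k := by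
    intro k
    have h := congrFun hw k
    have h2 : (Matrix.adjugate M.transpose).mulVec z k = ∑ i, M.adjugate i k * z i := by
      simp [Matrix.mulVec, dotProduct, ← Matrix.adjugate_transpose,
        Matrix.transpose_apply, mul_comm]
    rw [h2] at h
    exact h
  have h1 : ∑ i, c i * z i = eps * ∑ k, γ k * w k := by
    have h3 : ∑ i, c i * z i = ∑ k, γ k * (eps * w k) := by
      calc ∑ i, c i * z i = ∑ i, ∑ k, M.adjugate i k * γ k * z i := by
            apply Finset.sum_congr rfl; intro i _
            simp [hc, Matrix.mulVec, dotProduct, Finset.sum_mul]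
        _ = ∑ k, ∑ i, M.adjugate i k * γ k * z i := Finset.sum_comm
        _ = ∑ k, γ k * ∑ i, M.adjugate i k * z i := by
            apply Finset.sum_congr rfl; intro k _
            rw [Finset.mul_sum]; apply Finset.sum_congr rfl; intros; ring
        _ = ∑ k, γ k * (eps * w k) := by
            apply Finset.sum_congr rfl; intro k _; rw [hwk k]
    rw [h3, Finset.mul_sum]
    apply Finset.sum_congr rfl; intros; ring
  have h2 : M.mulVec c = fun k => 2 * (eps * γ k) := by
    have h4 : M.mulVec c = (M * M.adjugate).mulVec γ := by
      rw [hc, Matrix.mulVec_mulVec]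
    rw [h4, Matrix.mul_adjugate, hdeteps, Matrix.smul_mulVec, Matrix.one_mulVec]
    funext k
    simp [mul_assoc]
  have huM : ∀ k, (M.mulVec u) k = 2 * (eps * (if k = i0 then 1 else 0)) := by
    intro k
    have h5 : (M.mulVec u) k = (M * M.adjugate) k i0 := by
      simp [Matrix.mulVec, dotProduct, Matrix.mul_apply, hu]
    rw [h5, Matrix.mul_adjugate, hdeteps]
    simp [Matrix.one_apply, mul_ite]
  set N := M.map (Int.cast : ℤ → ZMod 2) with hN
  set xb : Fin d → ZMod 2 := fun i => ((u i : ℤ) : ZMod 2) with hxb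
  set yb : Fin d → ZMod 2 := fun i => ((c i : ℤ) : ZMod 2) with hyb
  set zb : Fin d → ZMod 2 := fun i => ((z i : ℤ) : ZMod 2) with hzb
  have hone : ∀ a : ZMod 2, a ≠ 0 → a = 1 := by decide
  have hxz : ∑ i, xb i * zb i = 1 := by
    have h6 : ((eps * w i0 : ℤ) : ZMod 2) = ∑ i, xb i * zb i := by
      rw [← hwk i0]
      push_cast
      apply Finset.sum_congr rfl; intros; ring
    rw [← h6]
    apply hone
    rw [Ne, ZMod.intCast_zmod_eq_zero_iff_dvd]
    intro hdvd
    rcases heps with h | h <;> rw [h] at hdvd <;> omega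
  have hyz : ∑ i, yb i * zb i = 0 := by
    have h7 : ((∑ i, c i * z i : ℤ) : ZMod 2) = ∑ i, yb i * zb i := by push_cast; rfl
    rw [← h7]
    apply hcast0
    obtain ⟨t, ht⟩ := hγ
    rw [h1, ht]
    exact ⟨eps * t, by ring⟩
  have hyb0 : yb = 0 := by
    by_contra hy0
    have hNx : N.mulVec xb = 0 := by
      rw [hN, hxb, cast_mulVec]
      funext k
      rw [huM k]
      exact hcast0 _ ⟨eps * (if k = i0 then 1 else 0), by ring⟩
    have hNy : N.mulVec yb = 0 := by
      rw [hN, hyb, cast_mulVec]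
      funext k
      rw [congrFun h2 k]
      exact hcast0 _ ⟨eps * γ k, by ring⟩
    have hx0 : xb ≠ 0 := by
      intro h
      rw [h] at hxz
      simp at hxz
    have hxy : xb ≠ yb := by
      intro h
      rw [h, hyz] at hxz
      exact zero_ne_one hxz
    have hadj : N.adjugate = 0 := adj_eq_zero_of_two_ker N xb yb hNx hNy hx0 hy0 hxy
    have hadjN : N.adjugate = (M.adjugate).map (Int.cast : ℤ → ZMod 2) := by
      rw [hN]
      have h8 := RingHom.map_adjugate (Int.castRingHom (ZMod 2)) M
      simpa [RingHom.mapMatrix_apply] using h8.symm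
    have h9 : yb = (N.adjugate).mulVec (fun i => ((γ i : ℤ) : ZMod 2)) := by
      rw [hadjN, cast_mulVec, hyb, hc]
    rw [hadj, Matrix.zero_mulVec] at h9
    exact hy0 h9
  have hdvdc : ∀ i, 2 ∣ c i := by
    intro i
    have := congrFun hyb0 i
    rw [hyb] at this
    exact (ZMod.intCast_zmod_eq_zero_iff_dvd _ 2).mp this
  choose m' hm' using hdvdc
  refine ⟨fun i => eps * m' i, ?_⟩
  funext k
  have hMm : (M.mulVec (fun i => eps * m' i)) k = eps * (M.mulVec m') k := by
    simp [Matrix.mulVec, dotProduct, Finset.mul_sum]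
    apply Finset.sum_congr rfl; intros; ring
  have hMc : (M.mulVec c) k = 2 * (M.mulVec m') k := by
    simp only [Matrix.mulVec, dotProduct]
    rw [Finset.mul_sum]
    apply Finset.sum_congr rfl
    intro i _
    rw [hm' i]; ring
  have h10 := congrFun h2 k
  rw [hMc] at h10
  have h11 : (M.mulVec m') k = eps * γ k := by omega
  rw [hMm, h11, ← mul_assoc, heps2, one_mul]

lemma exists_w {d : ℕ} (M : Matrix (Fin d) (Fin d) ℤ) (eps : ℤ)
    (heps : eps = 1 ∨ eps = -1) (hdeteps : M.det = 2 * eps)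
    (ξ : Fin d → ℝ) (z : Fin d → ℤ)
    (hz : (M.map (Int.cast : ℤ → ℝ)).transpose.mulVec ξ = fun i => (z i : ℝ))
    (hξ2 : ¬ ∃ s : Fin d → ℤ, ξ = fun i => (s i : ℝ)) :
    ∃ w : Fin d → ℤ, (∀ i, (w i : ℝ) = 2 * ξ i) ∧
      ((Matrix.adjugate M.transpose).mulVec z = fun i => eps * w i) ∧
      (∃ i0, ¬ (2 ∣ w i0)) := by
  classical
  have heps2 : (eps : ℝ) * (eps : ℝ) = 1 := by rcases heps with h | h <;> rw [h] <;> norm_num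
  set R := (M.transpose).map (Int.cast : ℤ → ℝ) with hR
  have hzR : R.mulVec ξ = fun i => (z i : ℝ) := by
    rw [hR, Matrix.transpose_map]
    exact hz
  have hdetR : R.det = ((2 * eps : ℤ) : ℝ) := by
    have h := RingHom.map_det (Int.castRingHom ℝ) M.transpose
    rw [RingHom.mapMatrix_apply] at h
    simp only [Int.coe_castRingHom] at h
    rw [hR, ← h, Matrix.det_transpose, hdeteps]
  have hadjR : R.adjugate = (Matrix.adjugate M.transpose).map (Int.cast : ℤ → ℝ) := by
    rw [hR]
    have h := RingHom.map_adjugate (Int.castRingHom ℝ) M.transpose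
    simpa [RingHom.mapMatrix_apply] using h.symm
  have hkey : ∀ i, (((Matrix.adjugate M.transpose).mulVec z i : ℤ) : ℝ) = (2 * eps : ℤ) * ξ i := by
    intro i
    have h1 : R.adjugate.mulVec (R.mulVec ξ) = fun k => R.det • ξ k := by
      rw [Matrix.mulVec_mulVec, Matrix.adjugate_mul, Matrix.smul_mulVec, Matrix.one_mulVec]
      rfl
    have h2 := congrFun h1 i
    rw [hzR, hadjR, cast_mulVecR] at h2
    rw [hdetR] at h2
    simpa using h2
  refine ⟨fun i => eps * (Matrix.adjugate M.transpose).mulVec z i, ?_, ?_, ?_⟩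
  · intro i
    have h3 := hkey i
    push_cast at h3 ⊢
    rw [h3]
    linear_combination (2 * ξ i) * heps2
  · funext i
    have h5 : eps * eps = 1 := by rcases heps with h | h <;> rw [h] <;> norm_num
    simp only []
    rw [← mul_assoc, h5, one_mul]
  · by_contra h
    push_neg at h
    have h2 : ∀ i, 2 ∣ eps * (Matrix.adjugate M.transpose).mulVec z i := by
      intro i
      simpa using h i
    choose s hs using h2
    apply hξ2
    refine ⟨s, funext fun i => ?_⟩
    have h3 : ((eps * (Matrix.adjugate M.transpose).mulVec z i : ℤ) : ℝ) = 2 * ξ i := by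
      have h4 := hkey i
      push_cast at h4 ⊢
      rw [h4]
      linear_combination (2 * ξ i) * heps2
    rw [hs i] at h3
    push_cast at h3
    linarith

lemma huv_conj (u v : ℤ → ℂ)
    (huv : ∀ ω : ℝ, Complex.normSq (fhat1 u ω) + Complex.normSq (fhat1 v ω) = 1) (x : ℝ) :
    (starRingEnd ℂ) (fhat1 u x) * fhat1 u x + (starRingEnd ℂ) (fhat1 v x) * fhat1 v x = 1 := by
  have h := huv x
  have h2 : ((Complex.normSq (fhat1 u x) + Complex.normSq (fhat1 v x) : ℝ) : ℂ) = 1 := by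
    rw [h]; norm_num
  push_cast at h2
  rw [Complex.normSq_eq_conj_mul_self, Complex.normSq_eq_conj_mul_self] at h2
  exact h2

/-- double canonical tight M-framelet filter banks in dimension `d` built
from a pair of 1D filters `u, v` with `|û|² + |v̂|² = 1`. -/
theorem stmt_12 (d : ℕ) (hd : 1 ≤ d) (u v : ℤ → ℂ)
    (hufin : (Function.support u).Finite) (hvfin : (Function.support v).Finite)
    (huv : ∀ ω : ℝ, Complex.normSq (fhat1 u ω) + Complex.normSq (fhat1 v ω) = 1)
    (M : Matrix (Fin d) (Fin d) ℤ) (hdet : M.det = 2 ∨ M.det = -2)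
    (ξ : Fin d → ℝ)
    (hξ1 : ∃ z : Fin d → ℤ,
      (M.map (Int.cast : ℤ → ℝ)).transpose.mulVec ξ = fun i => (z i : ℝ))
    (hξ2 : ¬ ∃ z : Fin d → ℤ, ξ = fun i => (z i : ℝ))
    (γ₁ γ₂ γ₃ γ₄ : Fin d → ℤ)
    (hγ₁ : (∃ m : Fin d → ℤ, γ₁ = M.mulVec m) ∧ γ₁ ≠ 0)
    (hγ₂ : (∃ m : Fin d → ℤ, γ₂ = M.mulVec m) ∧ γ₂ ≠ 0)
    (hγ₃ : ¬ ∃ m : Fin d → ℤ, γ₃ = M.mulVec m)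
    (hγ₄ : ¬ ∃ m : Fin d → ℤ, γ₄ = M.mulVec m)
    (a b₁ b₂ b₃ : (Fin d → ℤ) → ℂ)
    (hafin : (Function.support a).Finite) (hb₁fin : (Function.support b₁).Finite)
    (hb₂fin : (Function.support b₂).Finite) (hb₃fin : (Function.support b₃).Finite)
    (hfa : ∀ ω : Fin d → ℝ, fhatD a ω
      = (1 / 2 : ℂ) * (fhat1 u (dotZR γ₁ ω)
          + fhat1 u (dotZR γ₂ ω) * Complex.exp (-(Complex.I) * ((dotZR γ₃ ω : ℝ) : ℂ))))
    (hb₂ : ∀ ω : Fin d → ℝ, fhatD b₂ ω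
      = (1 / 2 : ℂ) * (fhat1 v (dotZR γ₁ ω)
          + fhat1 v (dotZR γ₂ ω) * Complex.exp (-(Complex.I) * ((dotZR γ₃ ω : ℝ) : ℂ))))
    (hb₁ : ∀ ω : Fin d → ℝ, fhatD b₁ ω
      = Complex.exp (-(Complex.I) * ((dotZR γ₄ ω : ℝ) : ℂ)) *
          (starRingEnd ℂ) (fhatD a (fun i => ω i + 2 * π * ξ i)))
    (hb₃ : ∀ ω : Fin d → ℝ, fhatD b₃ ω
      = Complex.exp (-(Complex.I) * ((dotZR γ₄ ω : ℝ) : ℂ)) *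
          (starRingEnd ℂ) (fhatD b₂ (fun i => ω i + 2 * π * ξ i))) :
    (∀ ω : Fin d → ℝ, Complex.normSq (fhatD a ω) + Complex.normSq (fhatD b₁ ω)
        + Complex.normSq (fhatD b₂ ω) + Complex.normSq (fhatD b₃ ω) = 1) ∧
    (∀ ω : Fin d → ℝ,
      (starRingEnd ℂ) (fhatD a ω) * fhatD a (fun i => ω i + 2 * π * ξ i)
        + (starRingEnd ℂ) (fhatD b₁ ω) * fhatD b₁ (fun i => ω i + 2 * π * ξ i)
        + (starRingEnd ℂ) (fhatD b₂ ω) * fhatD b₂ (fun i => ω i + 2 * π * ξ i)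
        + (starRingEnd ℂ) (fhatD b₃ ω) * fhatD b₃ (fun i => ω i + 2 * π * ξ i) = 0) := by
  classical
  obtain ⟨z, hz⟩ := hξ1
  set eps : ℤ := if M.det = 2 then 1 else -1 with heps_def
  have heps : eps = 1 ∨ eps = -1 := by
    rcases hdet with h | h <;> simp [heps_def, h]
  have hdeteps : M.det = 2 * eps := by
    rcases hdet with h | h <;> rw [heps_def] <;> simp [h] <;> omega
  obtain ⟨w, hwξ, hw, i0, hi0⟩ := exists_w M eps heps hdeteps ξ z hz hξ2
  have hξw : ∀ i, ξ i = (w i : ℝ) / 2 := fun i => by have := hwξ i; linarith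
  -- dot products with ξ
  have hcol : ∀ j, ∑ i, ((M i j : ℝ)) * ξ i = (z j : ℝ) := by
    intro j
    have h := congrFun hz j
    simpa [Matrix.mulVec, dotProduct, Matrix.map_apply, Matrix.transpose_apply] using h
  have dint : ∀ γ : Fin d → ℤ, (∃ m, γ = M.mulVec m) → ∃ n : ℤ, dotZR γ ξ = (n : ℝ) := by
    rintro γ ⟨m, hm⟩
    refine ⟨∑ j, m j * z j, ?_⟩
    have h1 : dotZR γ ξ = ∑ i, ∑ j, (M i j : ℝ) * (m j : ℝ) * ξ i := by
      unfold dotZR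
      apply Finset.sum_congr rfl; intro i _
      rw [hm]
      have : ((M.mulVec m i : ℤ) : ℝ) = ∑ j, (M i j : ℝ) * (m j : ℝ) := by
        simp [Matrix.mulVec, dotProduct]
      rw [this, Finset.sum_mul]
    rw [h1, Finset.sum_comm]
    push_cast
    apply Finset.sum_congr rfl
    intro j _
    rw [← hcol j, Finset.mul_sum]
    apply Finset.sum_congr rfl
    intros; ring
  have dhalf : ∀ γ : Fin d → ℤ, ¬(∃ m, γ = M.mulVec m) →
      ∃ n : ℤ, dotZR γ ξ = (n : ℝ) + 1/2 := by
    intro γ hγ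
    have hodd : ¬ (2 ∣ ∑ i, γ i * w i) := fun h =>
      hγ (mem_lattice_of_even M eps heps hdeteps w z i0 hw hi0 γ h)
    obtain ⟨n, hn⟩ : ∃ n : ℤ, ∑ i, γ i * w i = 2 * n + 1 := by
      rcases Int.even_or_odd (∑ i, γ i * w i) with h | h
      · exact absurd h.two_dvd hodd
      · obtain ⟨n, hn⟩ := h; exact ⟨n, hn⟩
    refine ⟨n, ?_⟩
    have h1 : dotZR γ ξ = ((∑ i, γ i * w i : ℤ) : ℝ) / 2 := by
      unfold dotZR
      push_cast
      rw [Finset.sum_div]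
      apply Finset.sum_congr rfl
      intro i _
      rw [hξw i]
      ring
    rw [h1, hn]
    push_cast
    ring
  obtain ⟨n₁, hn₁⟩ := dint γ₁ hγ₁.1
  obtain ⟨n₂, hn₂⟩ := dint γ₂ hγ₂.1
  obtain ⟨n₃, hn₃⟩ := dhalf γ₃ hγ₃
  obtain ⟨n₄, hn₄⟩ := dhalf γ₄ hγ₄
  constructor
  all_goals intro ω
  all_goals set ωp : Fin d → ℝ := fun i => ω i + 2*π*ξ i with hωp
  all_goals (
    have hd1 : dotZR γ₁ ωp = dotZR γ₁ ω + 2*π*(n₁:ℝ) := by rw [hωp, dot_shift, hn₁]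
    have hd2 : dotZR γ₂ ωp = dotZR γ₂ ω + 2*π*(n₂:ℝ) := by rw [hωp, dot_shift, hn₂]
    have hd3 : dotZR γ₃ ωp = dotZR γ₃ ω + 2*π*((n₃:ℝ)+1/2) := by rw [hωp, dot_shift, hn₃]
    have hd4 : dotZR γ₄ ωp = dotZR γ₄ ω + 2*π*((n₄:ℝ)+1/2) := by rw [hωp, dot_shift, hn₄]
    have hd1' : dotZR γ₁ (fun i => ωp i + 2*π*ξ i) = dotZR γ₁ ω + 2*π*((n₁+n₁ : ℤ):ℝ) := by
      rw [dot_shift, hd1, hn₁]; push_cast; ring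
    have hd2' : dotZR γ₂ (fun i => ωp i + 2*π*ξ i) = dotZR γ₂ ω + 2*π*((n₂+n₂ : ℤ):ℝ) := by
      rw [dot_shift, hd2, hn₂]; push_cast; ring
    have hd3' : dotZR γ₃ (fun i => ωp i + 2*π*ξ i) = dotZR γ₃ ω + 2*π*((2*n₃+1 : ℤ):ℝ) := by
      rw [dot_shift, hd3, hn₃]; push_cast; ring
    have hU1p : fhat1 u (dotZR γ₁ ωp) = fhat1 u (dotZR γ₁ ω) := by
      rw [hd1]; exact fhat1_per u _ n₁
    have hU2p : fhat1 u (dotZR γ₂ ωp) = fhat1 u (dotZR γ₂ ω) := by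
      rw [hd2]; exact fhat1_per u _ n₂
    have hV1p : fhat1 v (dotZR γ₁ ωp) = fhat1 v (dotZR γ₁ ω) := by
      rw [hd1]; exact fhat1_per v _ n₁
    have hV2p : fhat1 v (dotZR γ₂ ωp) = fhat1 v (dotZR γ₂ ω) := by
      rw [hd2]; exact fhat1_per v _ n₂
    have hU1pp : fhat1 u (dotZR γ₁ (fun i => ωp i + 2*π*ξ i)) = fhat1 u (dotZR γ₁ ω) := by
      rw [hd1']; exact fhat1_per u _ (n₁+n₁)
    have hU2pp : fhat1 u (dotZR γ₂ (fun i => ωp i + 2*π*ξ i)) = fhat1 u (dotZR γ₂ ω) := by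
      rw [hd2']; exact fhat1_per u _ (n₂+n₂)
    have hV1pp : fhat1 v (dotZR γ₁ (fun i => ωp i + 2*π*ξ i)) = fhat1 v (dotZR γ₁ ω) := by
      rw [hd1']; exact fhat1_per v _ (n₁+n₁)
    have hV2pp : fhat1 v (dotZR γ₂ (fun i => ωp i + 2*π*ξ i)) = fhat1 v (dotZR γ₂ ω) := by
      rw [hd2']; exact fhat1_per v _ (n₂+n₂)
    have hEp : Complex.exp (-(Complex.I) * ((dotZR γ₃ ωp : ℝ):ℂ))
        = - Complex.exp (-(Complex.I) * ((dotZR γ₃ ω : ℝ):ℂ)) := by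
      rw [hd3]; exact exp_shift_half _ n₃
    have hFp : Complex.exp (-(Complex.I) * ((dotZR γ₄ ωp : ℝ):ℂ))
        = - Complex.exp (-(Complex.I) * ((dotZR γ₄ ω : ℝ):ℂ)) := by
      rw [hd4]; exact exp_shift_half _ n₄
    have hEpp : Complex.exp (-(Complex.I) * ((dotZR γ₃ (fun i => ωp i + 2*π*ξ i) : ℝ):ℂ))
        = Complex.exp (-(Complex.I) * ((dotZR γ₃ ω : ℝ):ℂ)) := by
      rw [hd3']; exact exp_shift_int _ _
    have hAp : fhatD a ωp = (1/2 : ℂ) * (fhat1 u (dotZR γ₁ ω)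
        - fhat1 u (dotZR γ₂ ω) * Complex.exp (-(Complex.I) * ((dotZR γ₃ ω : ℝ):ℂ))) := by
      rw [hfa ωp, hU1p, hU2p, hEp]; ring
    have hBp : fhatD b₂ ωp = (1/2 : ℂ) * (fhat1 v (dotZR γ₁ ω)
        - fhat1 v (dotZR γ₂ ω) * Complex.exp (-(Complex.I) * ((dotZR γ₃ ω : ℝ):ℂ))) := by
      rw [hb₂ ωp, hV1p, hV2p, hEp]; ring
    have hApp : fhatD a (fun i => ωp i + 2*π*ξ i) = fhatD a ω := by
      rw [hfa (fun i => ωp i + 2*π*ξ i), hfa ω, hU1pp, hU2pp, hEpp]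
    have hBpp : fhatD b₂ (fun i => ωp i + 2*π*ξ i) = fhatD b₂ ω := by
      rw [hb₂ (fun i => ωp i + 2*π*ξ i), hb₂ ω, hV1pp, hV2pp, hEpp]
    have hb₁ω : fhatD b₁ ω = Complex.exp (-(Complex.I) * ((dotZR γ₄ ω : ℝ):ℂ)) *
        (starRingEnd ℂ) (fhatD a ωp) := hb₁ ω
    have hb₃ω : fhatD b₃ ω = Complex.exp (-(Complex.I) * ((dotZR γ₄ ω : ℝ):ℂ)) *
        (starRingEnd ℂ) (fhatD b₂ ωp) := hb₃ ω
    have hb₁ωp : fhatD b₁ ωp = (- Complex.exp (-(Complex.I) * ((dotZR γ₄ ω : ℝ):ℂ))) *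
        (starRingEnd ℂ) (fhatD a ω) := by
      rw [hb₁ ωp, hFp, hApp]
    have hb₃ωp : fhatD b₃ ωp = (- Complex.exp (-(Complex.I) * ((dotZR γ₄ ω : ℝ):ℂ))) *
        (starRingEnd ℂ) (fhatD b₂ ω) := by
      rw [hb₃ ωp, hFp, hBpp]
    have hEunit := conj_exp_unit (dotZR γ₃ ω)
    have hFunit := conj_exp_unit (dotZR γ₄ ω)
    clear hd1 hd2 hd3 hd4 hd1' hd2' hd3' hU1p hU2p hV1p hV2p hU1pp hU2pp hV1pp hV2pp hEp hFp hEpp)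
  -- Part 1
  · have huv1 := huv_conj u v huv (dotZR γ₁ ω)
    have huv2 := huv_conj u v huv (dotZR γ₂ ω)
    have hC : (starRingEnd ℂ) (fhatD a ω) * fhatD a ω
        + (starRingEnd ℂ) (fhatD b₁ ω) * fhatD b₁ ω
        + (starRingEnd ℂ) (fhatD b₂ ω) * fhatD b₂ ω
        + (starRingEnd ℂ) (fhatD b₃ ω) * fhatD b₃ ω = 1 := by
      rw [hb₁ω, hb₃ω, hAp, hBp, hfa ω, hb₂ ω]
      simp only [map_mul, map_add, map_sub, map_one, map_div₀, map_ofNat, Complex.conj_conj]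
      linear_combination ((1/2 : ℂ) * (starRingEnd ℂ) (fhat1 u (dotZR γ₂ ω)) * fhat1 u (dotZR γ₂ ω)
            + (1/2 : ℂ) * (starRingEnd ℂ) (fhat1 v (dotZR γ₂ ω)) * fhat1 v (dotZR γ₂ ω)) * hEunit
        + ((1/4 : ℂ) * (fhat1 u (dotZR γ₁ ω) - fhat1 u (dotZR γ₂ ω) * Complex.exp (-(Complex.I) * ((dotZR γ₃ ω : ℝ):ℂ)))
              * ((starRingEnd ℂ) (fhat1 u (dotZR γ₁ ω)) - (starRingEnd ℂ) (fhat1 u (dotZR γ₂ ω)) * (starRingEnd ℂ) (Complex.exp (-(Complex.I) * ((dotZR γ₃ ω : ℝ):ℂ))))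
            + (1/4 : ℂ) * (fhat1 v (dotZR γ₁ ω) - fhat1 v (dotZR γ₂ ω) * Complex.exp (-(Complex.I) * ((dotZR γ₃ ω : ℝ):ℂ)))
              * ((starRingEnd ℂ) (fhat1 v (dotZR γ₁ ω)) - (starRingEnd ℂ) (fhat1 v (dotZR γ₂ ω)) * (starRingEnd ℂ) (Complex.exp (-(Complex.I) * ((dotZR γ₃ ω : ℝ):ℂ))))) * hFunit
        + (1/2 : ℂ) * huv1 + (1/2 : ℂ) * huv2
    have h2 : ((Complex.normSq (fhatD a ω) + Complex.normSq (fhatD b₁ ω)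
        + Complex.normSq (fhatD b₂ ω) + Complex.normSq (fhatD b₃ ω) : ℝ) : ℂ) = 1 := by
      push_cast
      rw [Complex.normSq_eq_conj_mul_self, Complex.normSq_eq_conj_mul_self,
        Complex.normSq_eq_conj_mul_self, Complex.normSq_eq_conj_mul_self]
      exact hC
    exact_mod_cast h2
  -- Part 2
  · rw [hb₁ω, hb₁ωp, hb₃ω, hb₃ωp]
    simp only [map_mul, Complex.conj_conj, map_neg]
    linear_combination (-((starRingEnd ℂ) (fhatD a ω) * fhatD a ωp
      + (starRingEnd ℂ) (fhatD b₂ ω) * fhatD b₂ ωp)) * hFunit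
end

section
/- Let d₁, d₂: ℤ → ℝ be finitely supported real-valued 1D filters with |d̂ᵢ(ω)|² + |d̂ᵢ(ω+π)|² = 1 for all ω ∈ ℝ (i = 1, 2). Define 2D filters by b̂₀(ω₁,ω₂) = d̂₁(ω₁)·d̂₂(ω₂), b̂₂(ω₁,ω₂) = d̂₁(ω₁)·d̂₂(ω₂+π), b̂₁(ω) = e^{−iω₁}·conj(b̂₀(ω+(π,π))), b̂₃(ω) = e^{−iω₁}·conj(b̂₂(ω+(π,π))). Then {b₀; b₁, b₂, b₃} is a quincunx tight framelet filter bank. Moreover, if d₁ has order n sum rules with respect to 2 and d₂ has order m sum rules with respect to 2, then each of b₁, b₂, b₃ has at least order min(m,n) vanishing moments. -/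
open Complex Real

/-- Order `m` sum rules with respect to `2` for a 1D filter. -/
def SumRules1D (a : ℤ → ℂ) (m : ℕ) : Prop :=
  fhat1 a 0 = 1 ∧ ∀ j : ℕ, j < m → ∑ᶠ k : ℤ, ((-1 : ℂ) ^ k * a k * (k : ℂ) ^ j) = 0

/-- A 2D filter has order `n` vanishing moments. -/
def VM2D (b : ℤ × ℤ → ℂ) (n : ℕ) : Prop :=
  ∀ μ : ℕ × ℕ, μ.1 + μ.2 < n →
    ∑ᶠ k : ℤ × ℤ, b k * (k.1 : ℂ) ^ μ.1 * (k.2 : ℂ) ^ μ.2 = 0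

/-!
On the Fourier side, `b₁` and `b₃` are the canonical quincunx partners
`b̂ ω = e^{-iω₁} conj (â (ω + (π, π)))` of `a = b₀` and `a = b₂`. Such a partner has the energy
`|â (ω + (π, π))|²`, and by `2π`-periodicity
`conj (b̂ ω) b̂ (ω + (π, π)) = -conj (â ω) â (ω + (π, π))`, so each pair cancels in the mixed
condition. The four energies add up to
`(|d̂₁ ω₁|² + |d̂₁ (ω₁ + π)|²) (|d̂₂ ω₂|² + |d̂₂ (ω₂ + π)|²) = 1`.

A finitely supported filter is determined by its Fourier series, so each high-pass filter is a
tensor product of 1D filters obtained from `dᵢ` by modulation `(-1)ᵏ`, conjugate reversal and a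
unit delay. The moments of a tensor product are products of 1D moments, the sum rules say exactly
that the modulated filter has vanishing moments, and reversal and delay preserve vanishing moments.
-/

open Function ComplexConjugate

noncomputable section

namespace Framelet

def modulate (u : ℤ → ℂ) : ℤ → ℂ := fun k => (-1 : ℂ) ^ k * u k

def conjRev (u : ℤ → ℂ) : ℤ → ℂ := fun k => conj (u (-k))

def delay (u : ℤ → ℂ) : ℤ → ℂ := fun k => u (k - 1)

def highpass (u : ℤ → ℂ) : ℤ → ℂ := delay (conjRev (modulate u))

def tensor (φ ψ : ℤ → ℂ) : ℤ × ℤ → ℂ := fun k => φ k.1 * ψ k.2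

def moment (u : ℤ → ℂ) (j : ℕ) : ℂ := ∑ᶠ k : ℤ, u k * (k : ℂ) ^ j

variable {u φ ψ : ℤ → ℂ}

theorem _root_.Function.HasFiniteSupport.modulate (hu : HasFiniteSupport u) :
    HasFiniteSupport (modulate u) :=
  hu.fun_mul_right _

theorem _root_.Function.HasFiniteSupport.conjRev (hu : HasFiniteSupport u) :
    HasFiniteSupport (conjRev u) :=
  (hu.comp_of_injective neg_injective).fun_comp (g := conj) (map_zero _)

theorem _root_.Function.HasFiniteSupport.delay (hu : HasFiniteSupport u) :
    HasFiniteSupport (delay u) :=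
  hu.comp_of_injective (sub_left_injective (b := 1))

theorem _root_.Function.HasFiniteSupport.highpass (hu : HasFiniteSupport u) :
    HasFiniteSupport (highpass u) :=
  hu.modulate.conjRev.delay

theorem _root_.Function.HasFiniteSupport.tensor (hφ : HasFiniteSupport φ)
    (hψ : HasFiniteSupport ψ) : HasFiniteSupport (tensor φ ψ) :=
  (hφ.prod hψ).subset fun _ hk => ⟨left_ne_zero_of_mul hk, right_ne_zero_of_mul hk⟩

theorem exp_neg_I_int_mul_pi (k : ℤ) : exp (-I * k * π) = (-1) ^ k := by
  rw [show -I * k * π = ((-k : ℤ) : ℂ) * (π * I) by push_cast; ring, exp_int_mul, exp_pi_mul_I,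
    zpow_neg, ← inv_zpow, inv_neg_one]

theorem exp_neg_I_int_mul_two_pi (k : ℤ) : exp (-I * k * (2 * π)) = 1 := by
  rw [show -I * k * (2 * π) = ((-k : ℤ) : ℂ) * (2 * π * I) by push_cast; ring,
    exp_int_mul_two_pi_mul_I]

theorem normSq_exp_neg_I_mul (x : ℝ) : normSq (exp (-I * x)) = 1 := by
  rw [normSq_eq_norm_sq]
  simp [norm_exp]

theorem conj_exp_neg_I_mul_self (x : ℝ) : conj (exp (-I * x)) * exp (-I * x) = 1 := by
  rw [← exp_conj, ← Complex.exp_add]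
  simp

theorem exp_neg_I_mul_add_pi (x : ℝ) : exp (-I * (x + π : ℝ)) = -exp (-I * x) := by
  rw [ofReal_add, mul_add, Complex.exp_add, show -I * (π : ℂ) = -I * ((1 : ℤ) : ℂ) * π by simp,
    exp_neg_I_int_mul_pi]
  simp

theorem fhat1_modulate (u : ℤ → ℂ) (ω : ℝ) : fhat1 (modulate u) ω = fhat1 u (ω + π) := by
  refine finsum_congr fun k => ?_
  rw [modulate, ofReal_add, mul_add, Complex.exp_add, exp_neg_I_int_mul_pi]
  ring

theorem fhat1_add_two_pi (u : ℤ → ℂ) (ω : ℝ) : fhat1 u (ω + 2 * π) = fhat1 u ω := by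
  refine finsum_congr fun k => ?_
  push_cast
  rw [mul_add, Complex.exp_add, exp_neg_I_int_mul_two_pi, mul_one]

theorem fhat1_conjRev (u : ℤ → ℂ) (ω : ℝ) : fhat1 (conjRev u) ω = conj (fhat1 u ω) := by
  rw [fhat1, fhat1, ← conjAe_coe, AddEquivClass.map_finsum, ← finsum_comp_equiv (Equiv.neg ℤ)]
  refine finsum_congr fun k => ?_
  simp [conjRev, ← exp_conj]

theorem fhat1_delay (u : ℤ → ℂ) (ω : ℝ) : fhat1 (delay u) ω = exp (-I * ω) * fhat1 u ω := by
  rw [fhat1, fhat1, mul_finsum, ← finsum_comp_equiv (Equiv.addRight (1 : ℤ))]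
  refine finsum_congr fun k => ?_
  simp only [delay, Equiv.coe_addRight, add_sub_cancel_right, Int.cast_add, Int.cast_one]
  rw [mul_left_comm, ← Complex.exp_add]
  ring_nf

theorem fhat1_highpass (u : ℤ → ℂ) (ω : ℝ) :
    fhat1 (highpass u) ω = exp (-I * ω) * conj (fhat1 u (ω + π)) := by
  rw [highpass, fhat1_delay, fhat1_conjRev, fhat1_modulate]

theorem finsum_tensor (hφ : HasFiniteSupport φ) (hψ : HasFiniteSupport ψ) :
    ∑ᶠ k, tensor φ ψ k = (∑ᶠ i, φ i) * ∑ᶠ j, ψ j := by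
  rw [finsum_curry _ (hφ.tensor hψ), finsum_mul]
  exact finsum_congr fun i => (mul_finsum ψ (φ i)).symm

theorem fhat2_tensor (hφ : HasFiniteSupport φ) (hψ : HasFiniteSupport ψ) (ω : ℝ × ℝ) :
    fhat2 (tensor φ ψ) ω = fhat1 φ ω.1 * fhat1 ψ ω.2 := by
  rw [fhat1, fhat1, ← finsum_tensor (hφ.fun_mul_left _) (hψ.fun_mul_left _)]
  refine finsum_congr fun k => ?_
  rw [show -I * (k.1 * ω.1 + k.2 * ω.2) = -I * k.1 * ω.1 + -I * k.2 * ω.2 by ring,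
    Complex.exp_add]
  simp only [tensor]
  ring

theorem fhat2_add_two_pi (a : ℤ × ℤ → ℂ) (ω : ℝ × ℝ) :
    fhat2 a (ω.1 + 2 * π, ω.2 + 2 * π) = fhat2 a ω := by
  refine finsum_congr fun k => ?_
  push_cast
  rw [show -I * (k.1 * (ω.1 + 2 * π) + k.2 * (ω.2 + 2 * π))
      = -I * (k.1 * ω.1 + k.2 * ω.2) + -I * ((k.1 + k.2 : ℤ) : ℂ) * (2 * π) by push_cast; ring,
    Complex.exp_add, exp_neg_I_int_mul_two_pi, mul_one]

theorem fhat2_sub {a b : ℤ × ℤ → ℂ} (ha : HasFiniteSupport a) (hb : HasFiniteSupport b)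
    (ω : ℝ × ℝ) : fhat2 (a - b) ω = fhat2 a ω - fhat2 b ω := by
  rw [fhat2, fhat2, fhat2, ← finsum_sub_distrib (ha.fun_mul_left _) (hb.fun_mul_left _)]
  exact finsum_congr fun k => sub_mul _ _ _

def character (k : ℤ × ℤ) : Multiplicative (ℝ × ℝ) →* ℂ where
  toFun ω := exp (-I * (k.1 * ω.toAdd.1 + k.2 * ω.toAdd.2))
  map_one' := by simp
  map_mul' ω η := by
    rw [← Complex.exp_add]
    simp only [toAdd_mul, Prod.fst_add, Prod.snd_add, ofReal_add]
    ring_nf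

theorem int_eq_of_exp_neg_I_eq {m n : ℤ} (h : exp (-I * m) = exp (-I * n)) : m = n := by
  obtain ⟨l, hl⟩ := Complex.exp_eq_exp_iff_exists_int.1 h
  have hmn : ((n - m : ℤ) : ℝ) = π * 2 * l := by
    have := congrArg (· * I) hl
    apply ofReal_injective
    push_cast
    linear_combination -this + ((n : ℂ) - m - 2 * π * l) * I_mul_I
  by_cases hl0 : l = 0
  · simp only [hl0, Int.cast_zero, mul_zero, Int.cast_eq_zero] at hmn
    omega
  · have hirr : Irrational (π * 2 * l) := by
      simpa using (irrational_pi.mul_natCast (m := 2) two_ne_zero).mul_intCast hl0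
    exact absurd hmn.symm (hirr.ne_int _)

theorem character_injective : Injective character := by
  intro k l h
  have h₁ := DFunLike.congr_fun h (Multiplicative.ofAdd (1, 0))
  have h₂ := DFunLike.congr_fun h (Multiplicative.ofAdd (0, 1))
  exact Prod.ext (int_eq_of_exp_neg_I_eq (by simpa [character] using h₁))
    (int_eq_of_exp_neg_I_eq (by simpa [character] using h₂))

-- Dedekind's linear independence of the characters `ω ↦ exp (-i k·ω)`.
theorem eq_zero_of_fhat2_eq_zero {c : ℤ × ℤ → ℂ} (hc : HasFiniteSupport c)
    (h : ∀ ω, fhat2 c ω = 0) : c = 0 := by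
  unfold HasFiniteSupport at hc
  have hind := (linearIndependent_monoidHom (Multiplicative (ℝ × ℝ)) ℂ).comp _ character_injective
  funext k
  by_cases hk : k ∈ hc.toFinset
  · refine linearIndependent_iff'.1 hind hc.toFinset c ?_ k hk
    funext ω
    rw [Finset.sum_apply, Pi.zero_apply, ← h ω.toAdd, fhat2,
      finsum_eq_sum_of_support_subset (s := hc.toFinset) _ ?_]
    · simp [character]
    · exact fun k hk => by simpa using left_ne_zero_of_mul hk
  · simpa using hk

theorem eq_of_fhat2_eq {a b : ℤ × ℤ → ℂ} (ha : HasFiniteSupport a) (hb : HasFiniteSupport b)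
    (h : ∀ ω, fhat2 a ω = fhat2 b ω) : a = b :=
  sub_eq_zero.1 <| eq_zero_of_fhat2_eq_zero (ha.sub hb) fun ω => by
    rw [fhat2_sub ha hb, h, sub_self]

theorem moment_conjRev (u : ℤ → ℂ) (j : ℕ) :
    moment (conjRev u) j = (-1) ^ j * conj (moment u j) := by
  rw [moment, moment, ← conjAe_coe, AddEquivClass.map_finsum, mul_finsum,
    ← finsum_comp_equiv (Equiv.neg ℤ)]
  refine finsum_congr fun k => ?_
  simp only [conjRev, Equiv.neg_apply, neg_neg, conjAe_coe, map_mul, map_pow, map_intCast,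
    Int.cast_neg, neg_pow (k : ℂ)]
  ring

theorem moment_delay_eq_zero {n j : ℕ} (hu : HasFiniteSupport u) (h : ∀ i < n, moment u i = 0)
    (hj : j < n) : moment (delay u) j = 0 :=
  calc moment (delay u) j
      = ∑ᶠ k : ℤ, ∑ i ∈ Finset.range (j + 1), u k * (k : ℂ) ^ i * (j.choose i : ℂ) := by
        rw [moment, ← finsum_comp_equiv (Equiv.subRight (1 : ℤ)).symm]
        refine finsum_congr fun k => ?_
        simp only [delay, Equiv.subRight_symm_apply, add_sub_cancel_right, Int.cast_add,
          Int.cast_one, add_pow, one_pow, mul_one, Finset.mul_sum]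
        exact Finset.sum_congr rfl fun i _ => by ring
    _ = ∑ i ∈ Finset.range (j + 1), moment u i * (j.choose i : ℂ) := by
        rw [finsum_sum_comm _ _ fun i _ => (hu.fun_mul_left _).fun_mul_left _]
        simp only [moment, finsum_mul]
    _ = 0 := Finset.sum_eq_zero fun i hi => by
        rw [h i ((Finset.mem_range_succ_iff.1 hi).trans_lt hj), zero_mul]

theorem sum_tensor_mul_pow_mul_pow (hφ : HasFiniteSupport φ) (hψ : HasFiniteSupport ψ)
    (a b : ℕ) :
    ∑ᶠ k : ℤ × ℤ, tensor φ ψ k * (k.1 : ℂ) ^ a * (k.2 : ℂ) ^ b = moment φ a * moment ψ b := by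
  rw [moment, moment, ← finsum_tensor (hφ.fun_mul_left _) (hψ.fun_mul_left _)]
  exact finsum_congr fun k => by simp only [tensor]; ring

theorem vm2D_tensor_of_left {n : ℕ} (hφ : HasFiniteSupport φ) (hψ : HasFiniteSupport ψ)
    (h : ∀ j < n, moment φ j = 0) : VM2D (tensor φ ψ) n := fun μ hμ => by
  rw [sum_tensor_mul_pow_mul_pow hφ hψ, h μ.1 (by omega), zero_mul]

theorem vm2D_tensor_of_right {n : ℕ} (hφ : HasFiniteSupport φ) (hψ : HasFiniteSupport ψ)
    (h : ∀ j < n, moment ψ j = 0) : VM2D (tensor φ ψ) n := fun μ hμ => by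
  rw [sum_tensor_mul_pow_mul_pow hφ hψ, h μ.2 (by omega), mul_zero]

theorem moment_modulate_eq_zero {m j : ℕ} (h : SumRules1D u m) (hj : j < m) :
    moment (modulate u) j = 0 :=
  h.2 j hj

theorem moment_conjRev_modulate_eq_zero {m j : ℕ} (h : SumRules1D u m) (hj : j < m) :
    moment (conjRev (modulate u)) j = 0 := by
  rw [moment_conjRev, moment_modulate_eq_zero h hj, map_zero, mul_zero]

theorem moment_highpass_eq_zero {m j : ℕ} (hu : HasFiniteSupport u) (h : SumRules1D u m)
    (hj : j < m) : moment (highpass u) j = 0 :=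
  moment_delay_eq_zero hu.modulate.conjRev (fun _ hi => moment_conjRev_modulate_eq_zero h hi) hj

theorem normSq_fhat2_of_canonical {a b : ℤ × ℤ → ℂ}
    (hb : ∀ ω : ℝ × ℝ, fhat2 b ω = exp (-I * ω.1) * conj (fhat2 a (ω.1 + π, ω.2 + π)))
    (ω : ℝ × ℝ) : normSq (fhat2 b ω) = normSq (fhat2 a (ω.1 + π, ω.2 + π)) := by
  rw [hb, normSq_mul, normSq_conj, normSq_exp_neg_I_mul, one_mul]

theorem conj_fhat2_mul_add_of_canonical {a b : ℤ × ℤ → ℂ}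
    (hb : ∀ ω : ℝ × ℝ, fhat2 b ω = exp (-I * ω.1) * conj (fhat2 a (ω.1 + π, ω.2 + π)))
    (ω : ℝ × ℝ) :
    conj (fhat2 a ω) * fhat2 a (ω.1 + π, ω.2 + π)
      + conj (fhat2 b ω) * fhat2 b (ω.1 + π, ω.2 + π) = 0 := by
  have hper : fhat2 a (ω.1 + π + π, ω.2 + π + π) = fhat2 a ω := by
    simp only [add_assoc, ← two_mul, fhat2_add_two_pi]
  rw [hb, hb, hper, exp_neg_I_mul_add_pi, map_mul, conj_conj]
  linear_combination (-(fhat2 a (ω.1 + π, ω.2 + π) * conj (fhat2 a ω)))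
    * conj_exp_neg_I_mul_self ω.1

end Framelet

end

open Framelet

theorem stmt_18_general (d₁ d₂ : ℤ → ℝ)
    (hd₁fin : (Function.support d₁).Finite) (hd₂fin : (Function.support d₂).Finite)
    (hd₁ : ∀ ω : ℝ, Complex.normSq (fhat1 (fun k => (d₁ k : ℂ)) ω)
      + Complex.normSq (fhat1 (fun k => (d₁ k : ℂ)) (ω + π)) = 1)
    (hd₂ : ∀ ω : ℝ, Complex.normSq (fhat1 (fun k => (d₂ k : ℂ)) ω)
      + Complex.normSq (fhat1 (fun k => (d₂ k : ℂ)) (ω + π)) = 1)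
    (b₀ b₁ b₂ b₃ : ℤ × ℤ → ℂ)
    (hb₁fin : (Function.support b₁).Finite)
    (hb₂fin : (Function.support b₂).Finite) (hb₃fin : (Function.support b₃).Finite)
    (hb₀ : ∀ ω : ℝ × ℝ, fhat2 b₀ ω
      = fhat1 (fun k => (d₁ k : ℂ)) ω.1 * fhat1 (fun k => (d₂ k : ℂ)) ω.2)
    (hb₂ : ∀ ω : ℝ × ℝ, fhat2 b₂ ω
      = fhat1 (fun k => (d₁ k : ℂ)) ω.1 * fhat1 (fun k => (d₂ k : ℂ)) (ω.2 + π))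
    (hb₁ : ∀ ω : ℝ × ℝ, fhat2 b₁ ω
      = Complex.exp (-(Complex.I) * (ω.1 : ℂ)) * (starRingEnd ℂ) (fhat2 b₀ (ω.1 + π, ω.2 + π)))
    (hb₃ : ∀ ω : ℝ × ℝ, fhat2 b₃ ω
      = Complex.exp (-(Complex.I) * (ω.1 : ℂ)) * (starRingEnd ℂ) (fhat2 b₂ (ω.1 + π, ω.2 + π))) :
    -- {b₀; b₁, b₂, b₃} is a quincunx tight framelet filter bank
    ((∀ ω : ℝ × ℝ, Complex.normSq (fhat2 b₀ ω) + Complex.normSq (fhat2 b₁ ω)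
        + Complex.normSq (fhat2 b₂ ω) + Complex.normSq (fhat2 b₃ ω) = 1) ∧
      (∀ ω : ℝ × ℝ, (starRingEnd ℂ) (fhat2 b₀ ω) * fhat2 b₀ (ω.1 + π, ω.2 + π)
        + (starRingEnd ℂ) (fhat2 b₁ ω) * fhat2 b₁ (ω.1 + π, ω.2 + π)
        + (starRingEnd ℂ) (fhat2 b₂ ω) * fhat2 b₂ (ω.1 + π, ω.2 + π)
        + (starRingEnd ℂ) (fhat2 b₃ ω) * fhat2 b₃ (ω.1 + π, ω.2 + π) = 0)) ∧
    -- vanishing moments of the high-pass filters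
    (∀ n m : ℕ, SumRules1D (fun k => (d₁ k : ℂ)) n → SumRules1D (fun k => (d₂ k : ℂ)) m →
      VM2D b₁ (min m n) ∧ VM2D b₂ (min m n) ∧ VM2D b₃ (min m n)) := by
  set D₁ : ℤ → ℂ := fun k => (d₁ k : ℂ)
  set D₂ : ℤ → ℂ := fun k => (d₂ k : ℂ)
  have hD₁ : HasFiniteSupport D₁ := HasFiniteSupport.fun_comp hd₁fin ofReal_zero
  have hD₂ : HasFiniteSupport D₂ := HasFiniteSupport.fun_comp hd₂fin ofReal_zero
  have hper : ∀ x, fhat1 D₂ (x + π + π) = fhat1 D₂ x := fun x => by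
    rw [add_assoc, ← two_mul, fhat1_add_two_pi]
  have hb₁eq : b₁ = tensor (highpass D₁) (conjRev (modulate D₂)) :=
    eq_of_fhat2_eq hb₁fin (hD₁.highpass.tensor hD₂.modulate.conjRev) fun ω => by
      rw [hb₁, hb₀, fhat2_tensor hD₁.highpass hD₂.modulate.conjRev, fhat1_highpass,
        fhat1_conjRev, fhat1_modulate, map_mul]
      ring
  have hb₂eq : b₂ = tensor D₁ (modulate D₂) :=
    eq_of_fhat2_eq hb₂fin (hD₁.tensor hD₂.modulate) fun ω => by
      rw [hb₂, fhat2_tensor hD₁ hD₂.modulate, fhat1_modulate]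
  have hb₃eq : b₃ = tensor (highpass D₁) (conjRev D₂) :=
    eq_of_fhat2_eq hb₃fin (hD₁.highpass.tensor hD₂.conjRev) fun ω => by
      rw [hb₃, hb₂, fhat2_tensor hD₁.highpass hD₂.conjRev, fhat1_highpass, fhat1_conjRev, hper,
        map_mul]
      ring
  refine ⟨⟨fun ω => ?_, fun ω => ?_⟩, fun n m h₁ h₂ => ?_⟩
  · rw [normSq_fhat2_of_canonical hb₁, normSq_fhat2_of_canonical hb₃, hb₀, hb₀, hb₂, hb₂, hper]
    simp only [normSq_mul]
    linear_combination (normSq (fhat1 D₂ ω.2) + normSq (fhat1 D₂ (ω.2 + π))) * hd₁ ω.1 + hd₂ ω.2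
  · linear_combination conj_fhat2_mul_add_of_canonical hb₁ ω + conj_fhat2_mul_add_of_canonical hb₃ ω
  · rw [hb₁eq, hb₂eq, hb₃eq]
    exact ⟨vm2D_tensor_of_right hD₁.highpass hD₂.modulate.conjRev fun j hj =>
        moment_conjRev_modulate_eq_zero h₂ (hj.trans_le (min_le_left m n)),
      vm2D_tensor_of_right hD₁ hD₂.modulate fun j hj =>
        moment_modulate_eq_zero h₂ (hj.trans_le (min_le_left m n)),
      vm2D_tensor_of_left hD₁.highpass hD₂.conjRev fun j hj =>
        moment_highpass_eq_zero hD₁ h₁ (hj.trans_le (min_le_right m n))⟩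

/-- double canonical quincunx tight framelet filter banks from a tensor product
of two orthonormal 2-wavelet filters, and the vanishing moments of the high-pass filters. -/
theorem stmt_18 (d₁ d₂ : ℤ → ℝ)
    (hd₁fin : (Function.support d₁).Finite) (hd₂fin : (Function.support d₂).Finite)
    (hd₁ : ∀ ω : ℝ, Complex.normSq (fhat1 (fun k => (d₁ k : ℂ)) ω)
      + Complex.normSq (fhat1 (fun k => (d₁ k : ℂ)) (ω + π)) = 1)
    (hd₂ : ∀ ω : ℝ, Complex.normSq (fhat1 (fun k => (d₂ k : ℂ)) ω)
      + Complex.normSq (fhat1 (fun k => (d₂ k : ℂ)) (ω + π)) = 1)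
    (b₀ b₁ b₂ b₃ : ℤ × ℤ → ℂ)
    (hb₀fin : (Function.support b₀).Finite) (hb₁fin : (Function.support b₁).Finite)
    (hb₂fin : (Function.support b₂).Finite) (hb₃fin : (Function.support b₃).Finite)
    (hb₀ : ∀ ω : ℝ × ℝ, fhat2 b₀ ω
      = fhat1 (fun k => (d₁ k : ℂ)) ω.1 * fhat1 (fun k => (d₂ k : ℂ)) ω.2)
    (hb₂ : ∀ ω : ℝ × ℝ, fhat2 b₂ ω
      = fhat1 (fun k => (d₁ k : ℂ)) ω.1 * fhat1 (fun k => (d₂ k : ℂ)) (ω.2 + π))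
    (hb₁ : ∀ ω : ℝ × ℝ, fhat2 b₁ ω
      = Complex.exp (-(Complex.I) * (ω.1 : ℂ)) * (starRingEnd ℂ) (fhat2 b₀ (ω.1 + π, ω.2 + π)))
    (hb₃ : ∀ ω : ℝ × ℝ, fhat2 b₃ ω
      = Complex.exp (-(Complex.I) * (ω.1 : ℂ)) * (starRingEnd ℂ) (fhat2 b₂ (ω.1 + π, ω.2 + π))) :
    -- {b₀; b₁, b₂, b₃} is a quincunx tight framelet filter bank
    ((∀ ω : ℝ × ℝ, Complex.normSq (fhat2 b₀ ω) + Complex.normSq (fhat2 b₁ ω)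
        + Complex.normSq (fhat2 b₂ ω) + Complex.normSq (fhat2 b₃ ω) = 1) ∧
      (∀ ω : ℝ × ℝ, (starRingEnd ℂ) (fhat2 b₀ ω) * fhat2 b₀ (ω.1 + π, ω.2 + π)
        + (starRingEnd ℂ) (fhat2 b₁ ω) * fhat2 b₁ (ω.1 + π, ω.2 + π)
        + (starRingEnd ℂ) (fhat2 b₂ ω) * fhat2 b₂ (ω.1 + π, ω.2 + π)
        + (starRingEnd ℂ) (fhat2 b₃ ω) * fhat2 b₃ (ω.1 + π, ω.2 + π) = 0)) ∧
    -- vanishing moments of the high-pass filters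
    (∀ n m : ℕ, SumRules1D (fun k => (d₁ k : ℂ)) n → SumRules1D (fun k => (d₂ k : ℂ)) m →
      VM2D b₁ (min m n) ∧ VM2D b₂ (min m n) ∧ VM2D b₃ (min m n)) :=
  stmt_18_general d₁ d₂ hd₁fin hd₂fin hd₁ hd₂ b₀ b₁ b₂ b₃ hb₁fin hb₂fin hb₃fin hb₀ hb₂ hb₁ hb₃
end
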